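/- arXiv:2502.18296 — 13 statements merged into one kernel-verified Lean document; each statement's English description precedes it below -/
import Mathlib

section
/- Let (Ω, 𝒜) be a measurable space, μ a probability measure on Ω, d a natural number, and X : Ω → (Fin d → ℝ) a measurable function such that each component ω ↦ X ω j is μ-integrable. Then there exists ω ∈ Ω such that toLex (fun j => ∫ X · j ∂μ) ≤ toLex (X ω) in the lexicographic order on Fin d → ℝ. -/
/-!
Induction on `d`, proving the stronger claim that the set of such `ω` is not `μ`-null. If the
first coordinate exceeds its mean with positive probability, those `ω` already win. Otherwise it
is almost surely at most its mean, hence almost surely equal to it, and a non-null set of `ω`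
winning on the remaining coordinates (induction hypothesis) wins lexicographically.
-/

open MeasureTheory Filter

theorem Fin.toLex_le_iff_head_tail {β : Type*} [PartialOrder β] {n : ℕ} {a b : Fin (n + 1) → β} :
    toLex a ≤ toLex b ↔ a 0 < b 0 ∨ a 0 = b 0 ∧ toLex (Fin.tail a) ≤ toLex (Fin.tail b) := by
  have hlt : toLex a < toLex b ↔ a 0 < b 0 ∨ a 0 = b 0 ∧ toLex (Fin.tail a) < toLex (Fin.tail b) := by
    rw [← Fin.cons_self_tail a, ← Fin.cons_self_tail b]
    exact Fin.pi_lex_lt_cons_cons (α := fun _ => β) (· < ·)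
  have heq : toLex a = toLex b ↔ a 0 = b 0 ∧ toLex (Fin.tail a) = toLex (Fin.tail b) := by
    rw [toLex_inj, toLex_inj, ← Fin.cons_self_tail a, ← Fin.cons_self_tail b, Fin.cons_inj]
    simp only [Fin.cons_zero, Fin.tail_cons]
  rw [le_iff_lt_or_eq, le_iff_lt_or_eq]
  exact (or_congr hlt heq).trans (by tauto)

theorem ae_eq_integral_of_ae_le_integral {Ω : Type*} [MeasurableSpace Ω] {μ : Measure Ω}
    [IsProbabilityMeasure μ] {f : Ω → ℝ} (hf : Integrable f μ)
    (hle : ∀ᵐ ω ∂μ, f ω ≤ ∫ ω', f ω' ∂μ) : f =ᵐ[μ] fun _ => ∫ ω', f ω' ∂μ :=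
  (integral_eq_iff_of_ae_le hf (integrable_const _) hle).mp (by simp)

theorem frequently_toLex_integral_le {Ω : Type*} [MeasurableSpace Ω] (μ : Measure Ω)
    [IsProbabilityMeasure μ] :
    ∀ {d : ℕ} (X : Ω → Fin d → ℝ), (∀ j, Integrable (fun ω => X ω j) μ) →
      ∃ᵐ ω ∂μ, toLex (fun j => ∫ ω', X ω' j ∂μ) ≤ toLex (X ω)
  | 0, X, _ => Frequently.of_forall fun ω => (congrArg toLex (Subsingleton.elim _ _)).le
  | d + 1, X, hint => by
    by_cases hhead : ∃ᵐ ω ∂μ, ∫ ω', X ω' 0 ∂μ < X ω 0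
    · exact hhead.mono fun ω h => Fin.toLex_le_iff_head_tail.mpr (Or.inl h)
    · have hconst := ae_eq_integral_of_ae_le_integral (hint 0) (by simpa using hhead)
      have htail := frequently_toLex_integral_le μ (fun ω => Fin.tail (X ω)) (fun j => hint j.succ)
      refine (htail.and_eventually hconst).mono fun ω ⟨htail, hhead⟩ => ?_
      exact Fin.toLex_le_iff_head_tail.mpr (Or.inr ⟨hhead.symm, htail⟩)

theorem stmt0_general {Ω : Type*} [MeasurableSpace Ω] (μ : Measure Ω) [IsProbabilityMeasure μ]
    (d : ℕ) (X : Ω → (Fin d → ℝ))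
    (hint : ∀ j : Fin d, Integrable (fun ω => X ω j) μ) :
    ∃ ω : Ω, toLex (fun j : Fin d => ∫ ω', X ω' j ∂μ) ≤ toLex (X ω) :=
  (frequently_toLex_integral_le μ X hint).exists

theorem stmt0 {Ω : Type*} [MeasurableSpace Ω] (μ : Measure Ω) [IsProbabilityMeasure μ]
    (d : ℕ) (X : Ω → (Fin d → ℝ)) (hX : Measurable X)
    (hint : ∀ j : Fin d, Integrable (fun ω => X ω j) μ) :
    ∃ ω : Ω, toLex (fun j : Fin d => ∫ ω', X ω' j ∂μ) ≤ toLex (X ω) :=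
  stmt0_general μ d X hint
end

section
/- Let (Ω, 𝒜) be a measurable space, μ a probability measure on Ω, d a natural number, and X, Y : Ω → (Fin d → ℝ) measurable functions such that each component of X and of Y is μ-integrable. If toLex (X ω) < toLex (Y ω) for every ω ∈ Ω, then toLex (fun j => ∫ X · j ∂μ) < toLex (fun j => ∫ Y · j ∂μ) in the lexicographic order on Fin d → ℝ. -/
open MeasureTheory

theorem stmt1 {Ω : Type*} [MeasurableSpace Ω] (μ : Measure Ω) [IsProbabilityMeasure μ]
    (d : ℕ) (X Y : Ω → (Fin d → ℝ)) (hX : Measurable X) (hY : Measurable Y)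
    (hXint : ∀ j : Fin d, Integrable (fun ω => X ω j) μ)
    (hYint : ∀ j : Fin d, Integrable (fun ω => Y ω j) μ)
    (hlt : ∀ ω : Ω, toLex (X ω) < toLex (Y ω)) :
    toLex (fun j : Fin d => ∫ ω, X ω j ∂μ) <
      toLex (fun j : Fin d => ∫ ω, Y ω j ∂μ) := by
  classical
  set S : Fin d → Set Ω := fun j => {ω | X ω j ≠ Y ω j} with hS
  -- the union of the S j is the whole space
  have hcover : ∀ ω : Ω, ∃ j, ω ∈ S j := by
    intro ω
    obtain ⟨k, -, hk⟩ := hlt ω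
    exact ⟨k, hk.ne⟩
  -- some S j has positive measure
  have hex : ∃ j, μ (S j) ≠ 0 := by
    by_contra h
    push_neg at h
    have h0 : μ (⋃ j, S j) = 0 := measure_iUnion_null h
    have huniv : (⋃ j, S j) = Set.univ := by
      ext ω; simpa using hcover ω
    rw [huniv, measure_univ] at h0
    exact one_ne_zero h0
  -- take the least such index
  obtain ⟨i, hi, hmin⟩ := (IsWellFounded.wf : WellFounded ((· < ·) : Fin d → Fin d → Prop)).has_min
    {j | μ (S j) ≠ 0} hex
  have hnull : ∀ j, j < i → μ (S j) = 0 := by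
    intro j hj
    by_contra h
    exact hmin j h hj
  -- a.e. equality for j < i
  have haej : ∀ j, j < i → (fun ω => X ω j) =ᵐ[μ] (fun ω => Y ω j) := by
    intro j hj
    exact ae_iff.mpr (hnull j hj)
  -- a.e. all coordinates below i agree
  have haeall : ∀ᵐ ω ∂μ, ∀ j, j < i → X ω j = Y ω j := by
    rw [ae_all_iff]
    intro j
    by_cases h : j < i
    · filter_upwards [haej j h] with ω hω _
      exact hω
    · exact Filter.Eventually.of_forall fun ω hji => absurd hji h
  -- a.e. X ω i ≤ Y ω i
  have hle : ∀ᵐ ω ∂μ, X ω i ≤ Y ω i := by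
    filter_upwards [haeall] with ω hω
    obtain ⟨k, hk1, hk2⟩ := hlt ω
    rcases lt_trichotomy k i with h | h | h
    · exact absurd (hω k h) hk2.ne
    · exact h ▸ hk2.le
    · exact (hk1 i h).le
  -- strict inequality of integrals at i
  have hstrict : ∫ ω, X ω i ∂μ < ∫ ω, Y ω i ∂μ := by
    have hfint : Integrable (fun ω => Y ω i - X ω i) μ := (hYint i).sub (hXint i)
    have hfpos : 0 < ∫ ω, (Y ω i - X ω i) ∂μ := by
      rw [integral_pos_iff_support_of_nonneg_ae
        (by filter_upwards [hle] with ω hω; simpa [Pi.le_def, sub_nonneg] using hω) hfint]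
      have hsupp : Function.support (fun ω => Y ω i - X ω i) = S i := by
        ext ω
        simp [hS, Function.support, sub_ne_zero, ne_comm]
      rw [hsupp]
      exact hi.bot_lt
    have := integral_sub (hYint i) (hXint i)
    simp only [this] at hfpos
    linarith
  refine ⟨i, fun j hj => ?_, hstrict⟩
  exact integral_congr_ae (haej j hj)
end

section
/- Let (Ω, 𝒜) be a measurable space, μ a probability measure on Ω, d a natural number, and X : Ω → (Fin d → ℝ) a measurable function that is bounded, i.e. there exists C ∈ ℝ such that |X ω j| ≤ C for all ω ∈ Ω and j : Fin d. Then the (componentwise Bochner) integral ∫ X ∂μ belongs to convexHull ℝ (Set.range X). -/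
/-! The mean `b` of `X` always lies in the closure of `convexHull ℝ s`. If it is not in the hull
itself, there is a functional `f` supporting the hull at `b` and nonconstant on it. Since
`f ∘ X ≤ f b` a.e. and both sides have the same mean, `X` lies a.e. on the hyperplane `f = f b`,
whose trace on `s` spans a strictly smaller space; induct on the dimension of that span. -/

open MeasureTheory

theorem Convex.exists_le_of_notMem_interior {E : Type*} [TopologicalSpace E] [AddCommGroup E]
    [IsTopologicalAddGroup E] [Module ℝ E] [ContinuousSMul ℝ E] {K : Set E} (hK : Convex ℝ K)
    (hint : (interior K).Nonempty) {b : E} (hb : b ∉ interior K) :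
    ∃ f : StrongDual ℝ E, (∀ x ∈ K, f x ≤ f b) ∧ ∃ x ∈ K, f x < f b := by
  obtain ⟨f, hf⟩ := geometric_hahn_banach_open_point hK.interior isOpen_interior hb
  refine ⟨f, fun x hx => ?_, ?_⟩
  · have hK_cl : K ⊆ closure (interior K) :=
      hK.closure_interior_eq_closure_of_nonempty_interior hint ▸ subset_closure
    exact closure_minimal (fun y hy => (hf y hy).le) (isClosed_le f.continuous continuous_const)
      (hK_cl hx)
  · obtain ⟨x, hx⟩ := hint
    exact ⟨x, interior_subset hx, hf x hx⟩

theorem Convex.exists_le_of_mem_closure_of_notMem {E : Type*} [NormedAddCommGroup E]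
    [NormedSpace ℝ E] [FiniteDimensional ℝ E] {K : Set E} (hK : Convex ℝ K) {b : E}
    (hb : b ∈ closure K) (hbK : b ∉ K) :
    ∃ f : StrongDual ℝ E, (∀ x ∈ K, f x ≤ f b) ∧ ∃ x ∈ K, f x < f b := by
  -- Inside `V`, the translate `K' = K - b` has nonempty interior but `0 ∉ K'`.
  set V := vectorSpan ℝ K
  let φ : V →ᵃ[ℝ] E := V.subtype.toAffineMap + AffineMap.const ℝ V b
  have hφ : ∀ v, φ v = v + b := fun v => rfl
  have hb_span : b ∈ affineSpan ℝ K :=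
    closure_minimal (subset_affineSpan ℝ K) (affineSpan ℝ K).closed_of_finiteDimensional hb
  have hK_range : K ⊆ Set.range φ := fun x hx =>
    ⟨⟨x - b, vsub_mem_vectorSpan_of_mem_affineSpan_of_mem_affineSpan
      (subset_affineSpan ℝ K hx) hb_span⟩, sub_add_cancel x b⟩
  set K' := φ ⁻¹' K
  have hK'_image : φ '' K' = K := Set.image_preimage_eq_of_subset hK_range
  have hK'_span : vectorSpan ℝ K' = ⊤ := by
    apply Submodule.map_injective_of_injective V.injective_subtype
    rw [Submodule.map_top, Submodule.range_subtype]
    have hφ_linear : φ.linear = V.subtype := by ext; simp [φ]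
    rw [← hφ_linear, AffineMap.map_vectorSpan, hK'_image]
  have hK'_ne : K'.Nonempty := by
    obtain ⟨x, hx⟩ := closure_nonempty_iff.mp ⟨b, hb⟩
    obtain ⟨v, rfl⟩ := hK_range hx
    exact ⟨v, hx⟩
  have hK'_int : (interior K').Nonempty :=
    (hK.affine_preimage φ).interior_nonempty_iff_affineSpan_eq_top.2
      ((AffineSubspace.affineSpan_eq_top_iff_vectorSpan_eq_top_of_nonempty ℝ _ _ hK'_ne).2
        hK'_span)
  have h0 : (0 : V) ∉ interior K' := fun h => by
    have : φ 0 ∈ K := interior_subset (s := K') h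
    exact hbK (by simpa [hφ] using this)
  obtain ⟨g, hg_le, v, hv, hg_lt⟩ :=
    (hK.affine_preimage φ).exists_le_of_notMem_interior hK'_int h0
  obtain ⟨f, hfg, -⟩ := exists_extension_norm_eq V g
  have hf : ∀ v, f (φ v) = g v + f b := fun v => by rw [hφ, map_add, hfg]
  refine ⟨f, ?_, φ v, hv, by simpa [hf] using hg_lt⟩
  rw [← hK'_image]
  rintro _ ⟨w, hw, rfl⟩
  simpa [hf] using hg_le w hw

theorem vectorSpan_inter_preimage_singleton_lt {k E : Type*} [Ring k] [AddCommGroup E]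
    [Module k E] {s : Set E} {f : E →ₗ[k] k} {c : k} {p x : E} (hp : p ∈ s ∩ f ⁻¹' {c})
    (hx : x ∈ affineSpan k s) (hxc : f x ≠ c) :
    vectorSpan k (s ∩ f ⁻¹' {c}) < vectorSpan k s := by
  refine lt_of_le_of_ne (vectorSpan_mono k Set.inter_subset_left) fun h => hxc ?_
  have hker : vectorSpan k (s ∩ f ⁻¹' {c}) ≤ LinearMap.ker f := by
    rw [vectorSpan_def, Submodule.span_le]
    rintro _ ⟨y, ⟨-, hy⟩, z, ⟨-, hz⟩, rfl⟩
    rw [Set.mem_preimage, Set.mem_singleton_iff] at hy hz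
    change f (y - z) = 0
    rw [map_sub, hy, hz, sub_self]
  have hxp : x - p ∈ vectorSpan k s :=
    vsub_mem_vectorSpan_of_mem_affineSpan_of_mem_affineSpan hx (subset_affineSpan k s hp.1)
  have hxp_ker := hker (h ▸ hxp)
  rw [LinearMap.mem_ker, map_sub, sub_eq_zero] at hxp_ker
  exact hxp_ker.trans hp.2

theorem integral_mem_convexHull_of_ae_mem {Ω E : Type*} [MeasurableSpace Ω] {μ : Measure Ω}
    [IsProbabilityMeasure μ] [NormedAddCommGroup E] [NormedSpace ℝ E] [FiniteDimensional ℝ E]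
    {X : Ω → E} (hX : Integrable X μ) {s : Set E} (hs : ∀ᵐ ω ∂μ, X ω ∈ s) :
    ∫ ω, X ω ∂μ ∈ convexHull ℝ s := by
  have := FiniteDimensional.complete ℝ E
  induction hn : Module.finrank ℝ (vectorSpan ℝ s) using Nat.strong_induction_on
    generalizing s with
  | _ n ih =>
  set b := ∫ ω, X ω ∂μ
  by_cases hbK : b ∈ convexHull ℝ s
  · exact hbK
  have hb : b ∈ closure (convexHull ℝ s) :=
    (convex_convexHull ℝ s).closure.integral_mem isClosed_closure
      (hs.mono fun ω h => subset_closure (subset_convexHull ℝ s h)) hX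
  obtain ⟨f, hf_le, x, hx, hf_lt⟩ :=
    (convex_convexHull ℝ s).exists_le_of_mem_closure_of_notMem hb hbK
  have hfX : ∀ᵐ ω ∂μ, f (X ω) = f b := by
    have hle : (fun ω => f (X ω)) ≤ᵐ[μ] fun _ => f b :=
      hs.mono fun ω h => hf_le _ (subset_convexHull ℝ s h)
    refine (integral_eq_iff_of_ae_le (f.integrable_comp hX) (integrable_const _) hle).1 ?_
    rw [f.integral_comp_comm hX, integral_const, probReal_univ, one_smul]
  have hs' : ∀ᵐ ω ∂μ, X ω ∈ s ∩ f ⁻¹' {f b} := hs.and hfX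
  obtain ⟨ω, hω⟩ := hs'.exists
  have hlt : vectorSpan ℝ (s ∩ f ⁻¹' {f b}) < vectorSpan ℝ s :=
    vectorSpan_inter_preimage_singleton_lt (f := (f : E →ₗ[ℝ] ℝ)) hω
      (convexHull_subset_affineSpan s hx) hf_lt.ne
  exact convexHull_mono Set.inter_subset_left
    (ih _ (hn ▸ Submodule.finrank_lt_finrank_of_lt hlt) hs' rfl)

theorem stmt2 {Ω : Type*} [MeasurableSpace Ω] (μ : Measure Ω) [IsProbabilityMeasure μ]
    (d : ℕ) (X : Ω → (Fin d → ℝ)) (hX : Measurable X)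
    (hbd : ∃ C : ℝ, ∀ (ω : Ω) (j : Fin d), |X ω j| ≤ C) :
    (∫ ω, X ω ∂μ) ∈ convexHull ℝ (Set.range X) := by
  obtain ⟨C, hC⟩ := hbd
  have hX_int : Integrable X μ :=
    .of_bound hX.aestronglyMeasurable |C| <| .of_forall fun ω =>
      (pi_norm_le_iff_of_nonneg (abs_nonneg C)).2 fun j => (hC ω j).trans (le_abs_self C)
  exact integral_mem_convexHull_of_ae_mem hX_int (.of_forall Set.mem_range_self)
end

section
/- Let (Ω, 𝒜) be a measurable space, d a natural number, and X : Ω → (Fin d → ℝ) a measurable function that is bounded, i.e. there exists C ∈ ℝ such that |X ω j| ≤ C for all ω and j. Define B = { y : Fin d → ℝ | ∃ ν : Measure Ω, IsProbabilityMeasure ν ∧ y = ∫ X ∂ν }. Then every extreme point of B belongs to Set.range X, i.e. Set.extremePoints ℝ B ⊆ Set.range X. -/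
open MeasureTheory

/-- If a real function integrates to `c` but is a.e. strictly greater than `c`
under a probability measure, contradiction. -/
lemma stmt3_aux_strict {Ω : Type*} [MeasurableSpace Ω] (μ : Measure Ω)
    [IsProbabilityMeasure μ] {f : Ω → ℝ} (hf : Integrable f μ) {c : ℝ}
    (hint : ∫ ω, f ω ∂μ = c) (hae : ∀ᵐ ω ∂μ, c < f ω) : False := by
  have hg : Integrable (fun ω => f ω - c) μ := hf.sub (integrable_const c)
  have h0 : ∫ ω, (f ω - c) ∂μ = 0 := by
    rw [integral_sub hf (integrable_const c), hint, integral_const]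
    simp
  have hnn : 0 ≤ᶠ[ae μ] fun ω => f ω - c := hae.mono fun ω hω => by simpa using sub_nonneg.mpr hω.le
  have := (integral_eq_zero_iff_of_nonneg_ae hnn hg).mp h0
  obtain ⟨ω, h1, h2⟩ := (this.and hae).exists
  simp only [Pi.zero_apply] at h1
  linarith

theorem stmt3 {Ω : Type*} [MeasurableSpace Ω]
    (d : ℕ) (X : Ω → (Fin d → ℝ)) (hX : Measurable X)
    (hbd : ∃ C : ℝ, ∀ (ω : Ω) (j : Fin d), |X ω j| ≤ C) :
    Set.extremePoints ℝ
        {y : Fin d → ℝ | ∃ ν : Measure Ω, IsProbabilityMeasure ν ∧ y = ∫ ω, X ω ∂ν} ⊆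
      Set.range X := by
  obtain ⟨C, hC⟩ := hbd
  set B : Set (Fin d → ℝ) :=
    {y : Fin d → ℝ | ∃ ν : Measure Ω, IsProbabilityMeasure ν ∧ y = ∫ ω, X ω ∂ν} with hB
  -- X is integrable w.r.t. every probability measure
  have hXint : ∀ (μ : Measure Ω), IsProbabilityMeasure μ → Integrable X μ := by
    intro μ hμ
    refine Integrable.mono' (integrable_const (max C 0)) hX.aestronglyMeasurable
      (Filter.Eventually.of_forall fun ω => ?_)
    rw [pi_norm_le_iff_of_nonneg (le_max_right C 0)]
    intro j
    exact (hC ω j).trans (le_max_left C 0)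
  intro y hy
  rw [mem_extremePoints] at hy
  obtain ⟨⟨ν, hν, hyν⟩, hext⟩ := hy
  -- Step: for every measurable set A with 0 < ν A < 1, the conditional
  -- barycenter over A equals y.
  have key : ∀ A : Set Ω, MeasurableSet A → ν A ≠ 0 → ν A ≠ 1 →
      ∫ ω, X ω ∂((ν A)⁻¹ • ν.restrict A) = y := by
    intro A hA h0 h1
    have hAne : ν A ≠ ⊤ := (measure_lt_top ν A).ne
    have hAc0 : ν Aᶜ ≠ 0 := by
      intro h
      apply h1
      have := measure_add_measure_compl (μ := ν) hA
      rw [h, add_zero] at this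
      simpa using this
    have hAcne : ν Aᶜ ≠ ⊤ := (measure_lt_top ν Aᶜ).ne
    set ν₁ : Measure Ω := (ν A)⁻¹ • ν.restrict A with hν₁
    set ν₂ : Measure Ω := (ν Aᶜ)⁻¹ • ν.restrict Aᶜ with hν₂
    have hp1 : IsProbabilityMeasure ν₁ := by
      constructor
      rw [hν₁, Measure.smul_apply, Measure.restrict_apply_univ, smul_eq_mul,
        ENNReal.inv_mul_cancel h0 hAne]
    have hp2 : IsProbabilityMeasure ν₂ := by
      constructor
      rw [hν₂, Measure.smul_apply, Measure.restrict_apply_univ, smul_eq_mul,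
        ENNReal.inv_mul_cancel hAc0 hAcne]
    have hi1 : Integrable X ν₁ := hXint _ hp1
    have hi2 : Integrable X ν₂ := hXint _ hp2
    set b₁ := ∫ ω, X ω ∂ν₁ with hb₁
    set b₂ := ∫ ω, X ω ∂ν₂ with hb₂
    have hb₁B : b₁ ∈ B := ⟨ν₁, hp1, rfl⟩
    have hb₂B : b₂ ∈ B := ⟨ν₂, hp2, rfl⟩
    -- weights
    set a : ℝ := (ν A).toReal with ha
    set b : ℝ := (ν Aᶜ).toReal with hbdef
    have ha0 : 0 < a := ENNReal.toReal_pos h0 hAne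
    have hb0 : 0 < b := ENNReal.toReal_pos hAc0 hAcne
    have hab : a + b = 1 := by
      rw [ha, hbdef, ← ENNReal.toReal_add hAne hAcne,
        measure_add_measure_compl hA]
      simp
    -- y = a • b₁ + b • b₂
    have h1int : ∫ ω, X ω ∂(ν.restrict A) = a • b₁ := by
      rw [hb₁, hν₁, integral_smul_measure, ← smul_assoc, smul_eq_mul,
        ENNReal.toReal_inv, ha, mul_inv_cancel₀ ha0.ne', one_smul]
    have h2int : ∫ ω, X ω ∂(ν.restrict Aᶜ) = b • b₂ := by
      rw [hb₂, hν₂, integral_smul_measure, ← smul_assoc, smul_eq_mul,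
        ENNReal.toReal_inv, hbdef, mul_inv_cancel₀ hb0.ne', one_smul]
    have hysum : y = a • b₁ + b • b₂ := by
      rw [hyν, ← integral_add_compl hA (hXint ν hν), h1int, h2int]
    have hseg : y ∈ openSegment ℝ b₁ b₂ := ⟨a, b, ha0, hb0, hab, hysum.symm⟩
    exact (hext b₁ hb₁B b₂ hb₂B hseg).1
  -- coordinate integrability
  have hcoordint : ∀ (μ : Measure Ω), IsProbabilityMeasure μ →
      ∀ j, Integrable (fun ω => X ω j) μ := by
    intro μ hμ j
    exact ((ContinuousLinearMap.proj (R := ℝ) (φ := fun _ : Fin d => ℝ) j).integrable_comp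
      (hXint μ hμ))
  have hcoord : ∀ (μ : Measure Ω), IsProbabilityMeasure μ → ∀ j,
      ∫ ω, X ω j ∂μ = (∫ ω, X ω ∂μ) j := by
    intro μ hμ j
    exact (ContinuousLinearMap.integral_comp_comm
      (ContinuousLinearMap.proj (R := ℝ) (φ := fun _ : Fin d => ℝ) j) (hXint μ hμ))
  -- For each j, ν {ω | y j < X ω j} = 0
  have hgt : ∀ j : Fin d, ν {ω | y j < X ω j} = 0 := by
    intro j
    by_contra h0
    set A := {ω | y j < X ω j} with hAdef
    have hA : MeasurableSet A :=
      measurableSet_lt measurable_const ((measurable_pi_apply j).comp hX)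
    by_cases h1 : ν A = 1
    · -- a.e. y j < X ω j
      have hae : ∀ᵐ ω ∂ν, y j < X ω j := by
        rw [MeasureTheory.ae_iff]
        have : {ω | ¬ y j < X ω j} = Aᶜ := by ext ω; simp [hAdef]
        rw [this]
        rw [measure_compl hA (measure_lt_top ν A).ne, h1]
        simp
      exact stmt3_aux_strict ν (hcoordint ν hν j)
        (by rw [hcoord ν hν j, ← hyν]) hae
    · set ν₁ : Measure Ω := (ν A)⁻¹ • ν.restrict A with hν₁
      have hp1 : IsProbabilityMeasure ν₁ := by
        constructor
        rw [hν₁, Measure.smul_apply, Measure.restrict_apply_univ, smul_eq_mul,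
          ENNReal.inv_mul_cancel h0 (measure_lt_top ν A).ne]
      have hbar : ∫ ω, X ω ∂ν₁ = y := key A hA h0 h1
      have hae : ∀ᵐ ω ∂ν₁, y j < X ω j := by
        rw [hν₁]
        refine Filter.Eventually.filter_mono (Measure.ae_smul_measure_le _) ?_
        exact (ae_restrict_mem hA).mono fun ω hω => hω
      exact stmt3_aux_strict ν₁ (hcoordint ν₁ hp1 j)
        (by rw [hcoord ν₁ hp1 j, hbar]) hae
  have hlt : ∀ j : Fin d, ν {ω | X ω j < y j} = 0 := by
    intro j
    by_contra h0
    set A := {ω | X ω j < y j} with hAdef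
    have hA : MeasurableSet A :=
      measurableSet_lt ((measurable_pi_apply j).comp hX) measurable_const
    by_cases h1 : ν A = 1
    · have hae : ∀ᵐ ω ∂ν, -(y j) < -(X ω j) := by
        rw [MeasureTheory.ae_iff]
        have : {ω | ¬ -(y j) < -(X ω j)} = Aᶜ := by ext ω; simp [hAdef]
        rw [this]
        rw [measure_compl hA (measure_lt_top ν A).ne, h1]
        simp
      exact stmt3_aux_strict ν (f := fun ω => -(X ω j))
        ((hcoordint ν hν j).neg)
        (by rw [integral_neg, hcoord ν hν j, ← hyν]) hae
    · set ν₁ : Measure Ω := (ν A)⁻¹ • ν.restrict A with hν₁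
      have hp1 : IsProbabilityMeasure ν₁ := by
        constructor
        rw [hν₁, Measure.smul_apply, Measure.restrict_apply_univ, smul_eq_mul,
          ENNReal.inv_mul_cancel h0 (measure_lt_top ν A).ne]
      have hbar : ∫ ω, X ω ∂ν₁ = y := key A hA h0 h1
      have hae : ∀ᵐ ω ∂ν₁, -(y j) < -(X ω j) := by
        rw [hν₁]
        refine Filter.Eventually.filter_mono (Measure.ae_smul_measure_le _) ?_
        exact (ae_restrict_mem hA).mono fun ω hω => by
          simp only [hAdef, Set.mem_setOf_eq] at hω
          linarith
      exact stmt3_aux_strict ν₁ (f := fun ω => -(X ω j))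
        ((hcoordint ν₁ hp1 j).neg)
        (by rw [integral_neg, hcoord ν₁ hp1 j, hbar]) hae
  -- conclude: X = y a.e.
  have haeeq : ∀ᵐ ω ∂ν, X ω = y := by
    have hj : ∀ j : Fin d, ∀ᵐ ω ∂ν, X ω j = y j := by
      intro j
      have h1 : ∀ᵐ ω ∂ν, ¬ y j < X ω j := by
        rw [MeasureTheory.ae_iff]
        simpa using hgt j
      have h2 : ∀ᵐ ω ∂ν, ¬ X ω j < y j := by
        rw [MeasureTheory.ae_iff]
        simpa using hlt j
      exact (h1.and h2).mono fun ω ⟨ha, hb⟩ => le_antisymm (not_lt.mp ha) (not_lt.mp hb)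
    have := (MeasureTheory.ae_all_iff).mpr hj
    exact this.mono fun ω hω => funext hω
  obtain ⟨ω, hω⟩ := haeeq.exists
  exact ⟨ω, hω⟩
end

section
/- Let (Ω, 𝒜) be a measurable space, d a natural number, and X : Ω → (Fin d → ℝ) a measurable function that is bounded, i.e. there exists C ∈ ℝ such that |X ω j| ≤ C for all ω and j. Define B = { y : Fin d → ℝ | ∃ ν : Measure Ω, IsProbabilityMeasure ν ∧ y = ∫ X ∂ν }. If Set.range X is a closed subset of Fin d → ℝ, then B is compact. -/
/-!
By Carathéodory, every point of the convex hull of a set `K` in an `n`-dimensional space is a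
convex combination of `n + 1` points of `K`, so the convex hull of a compact `K` is a continuous
image of the compact set `Δₙ × Kⁿ⁺¹`. The barycenters of `X` are exactly the convex hull of its
compact range `K`: Dirac masses give `K`, mixtures of measures give convexity, and conversely the
integral of a function with values in the closed convex set `conv K` lies in `conv K`.
-/

open MeasureTheory Module Set Function

section Caratheodory

variable {𝕜 E : Type*} [Field 𝕜] [LinearOrder 𝕜] [IsStrictOrderedRing 𝕜]
  [AddCommGroup E] [Module 𝕜 E] [FiniteDimensional 𝕜 E]

theorem exists_stdSimplex_sum_smul_eq_of_mem_convexHull {s : Set E} {x : E}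
    (hx : x ∈ convexHull 𝕜 s) :
    ∃ w ∈ stdSimplex 𝕜 (Fin (finrank 𝕜 E + 1)), ∃ z : Fin (finrank 𝕜 E + 1) → E,
      (∀ i, z i ∈ s) ∧ ∑ i, w i • z i = x := by
  obtain ⟨ι, _, z, w, hzs, hz, hw, hw₁, hwz⟩ := eq_pos_convex_span_of_mem_convexHull hx
  obtain ⟨e, he⟩ := convexHull_nonempty_iff.mp ⟨x, hx⟩
  obtain ⟨g⟩ : Nonempty (ι ↪ Fin (finrank 𝕜 E + 1)) :=
    Embedding.nonempty_of_card_le <| by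
      simpa using hz.card_le_finrank_succ.trans (Nat.succ_le_succ (Submodule.finrank_le _))
  -- pad the Carathéodory combination with zero weights outside the range of `g`
  have hW : ∀ j ∉ range g, extend g w 0 j = 0 := fun j hj =>
    extend_apply' _ _ _ (by simpa using hj)
  refine ⟨extend g w 0, ⟨fun j => ?_, ?_⟩, extend g z fun _ => e, fun j => ?_, ?_⟩
  · by_cases hj : j ∈ range g
    · obtain ⟨i, rfl⟩ := hj
      simpa [g.injective.extend_apply] using (hw i).le
    · simp [hW j hj]
  · rw [← hw₁]
    exact (Fintype.sum_of_injective g g.injective _ _ hW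
      fun i => (g.injective.extend_apply ..).symm).symm
  · by_cases hj : j ∈ range g
    · obtain ⟨i, rfl⟩ := hj
      simpa [g.injective.extend_apply] using hzs (mem_range_self i)
    · rwa [extend_apply' _ _ _ (by simpa using hj)]
  · rw [← hwz]
    refine (Fintype.sum_of_injective g g.injective _ _ (fun j hj => by simp [hW j hj])
      fun i => ?_).symm
    simp only [g.injective.extend_apply]

theorem convexHull_eq_image_stdSimplex_prod (s : Set E) :
    convexHull 𝕜 s = (fun p : (Fin (finrank 𝕜 E + 1) → 𝕜) × (Fin (finrank 𝕜 E + 1) → E) =>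
      ∑ i, p.1 i • p.2 i) '' (stdSimplex 𝕜 _ ×ˢ univ.pi fun _ => s) := by
  refine Subset.antisymm (fun x hx => ?_) ?_
  · obtain ⟨w, hw, z, hzs, rfl⟩ := exists_stdSimplex_sum_smul_eq_of_mem_convexHull hx
    exact ⟨(w, z), ⟨hw, fun i _ => hzs i⟩, rfl⟩
  · rintro _ ⟨⟨w, z⟩, ⟨⟨hw₀, hw₁⟩, hzs⟩, rfl⟩
    exact (convex_convexHull 𝕜 s).sum_mem (fun i _ => hw₀ i) hw₁
      fun i _ => subset_convexHull 𝕜 s (hzs i (mem_univ i))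

end Caratheodory

theorem IsCompact.convexHull {E : Type*} [AddCommGroup E] [Module ℝ E] [TopologicalSpace E]
    [ContinuousAdd E] [ContinuousSMul ℝ E] [FiniteDimensional ℝ E] {s : Set E}
    (hs : IsCompact s) : IsCompact (convexHull ℝ s) := by
  rw [convexHull_eq_image_stdSimplex_prod]
  exact ((isCompact_stdSimplex ℝ _).prod (isCompact_univ_pi fun _ => hs)).image (by fun_prop)

section Barycenters

variable {Ω E : Type*} [MeasurableSpace Ω] [NormedAddCommGroup E] [NormedSpace ℝ E]

def barycenters (X : Ω → E) : Set E :=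
  {y | ∃ ν : Measure Ω, IsProbabilityMeasure ν ∧ y = ∫ ω, X ω ∂ν}

variable {X : Ω → E}

theorem range_subset_barycenters [CompleteSpace E] (hX : StronglyMeasurable X) :
    range X ⊆ barycenters X := by
  rintro _ ⟨ω, rfl⟩
  exact ⟨Measure.dirac ω, inferInstance, (integral_dirac' _ _ hX).symm⟩

theorem convex_barycenters (hX : ∀ ν : Measure Ω, IsProbabilityMeasure ν → Integrable X ν) :
    Convex ℝ (barycenters X) := by
  rintro _ ⟨ν₁, hν₁, rfl⟩ _ ⟨ν₂, hν₂, rfl⟩ a b ha hb hab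
  refine ⟨ENNReal.ofReal a • ν₁ + ENNReal.ofReal b • ν₂, ⟨?_⟩, ?_⟩
  · simp [hν₁.measure_univ, hν₂.measure_univ, ← ENNReal.ofReal_add ha hb, hab]
  · rw [integral_add_measure ((hX ν₁ hν₁).smul_measure (by simp))
      ((hX ν₂ hν₂).smul_measure (by simp)), integral_smul_measure, integral_smul_measure,
      ENNReal.toReal_ofReal ha, ENNReal.toReal_ofReal hb]

theorem barycenters_subset [CompleteSpace E] {s : Set E} (hs : Convex ℝ s) (hsc : IsClosed s)
    (hXs : ∀ ω, X ω ∈ s) (hX : ∀ ν : Measure Ω, IsProbabilityMeasure ν → Integrable X ν) :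
    barycenters X ⊆ s := by
  rintro _ ⟨ν, hν, rfl⟩
  exact hs.integral_mem hsc (.of_forall hXs) (hX ν hν)

theorem barycenters_eq_convexHull_range [FiniteDimensional ℝ E] (hX : StronglyMeasurable X)
    (hK : IsCompact (range X)) : barycenters X = convexHull ℝ (range X) := by
  have hint : ∀ ν : Measure Ω, IsProbabilityMeasure ν → Integrable X ν := fun ν _ =>
    let ⟨C, hC⟩ := hK.isBounded.exists_norm_le
    .of_bound hX.aestronglyMeasurable C (.of_forall fun ω => hC _ (mem_range_self ω))
  exact (barycenters_subset (convex_convexHull ℝ _) hK.convexHull.isClosed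
    (fun ω => subset_convexHull ℝ _ (mem_range_self ω)) hint).antisymm
    (convexHull_min (range_subset_barycenters hX) (convex_barycenters hint))

end Barycenters

theorem stmt4 {Ω : Type*} [MeasurableSpace Ω]
    (d : ℕ) (X : Ω → (Fin d → ℝ)) (hX : Measurable X)
    (hbd : ∃ C : ℝ, ∀ (ω : Ω) (j : Fin d), |X ω j| ≤ C)
    (hclosed : IsClosed (Set.range X)) :
    IsCompact {y : Fin d → ℝ | ∃ ν : Measure Ω, IsProbabilityMeasure ν ∧ y = ∫ ω, X ω ∂ν} := by
  obtain ⟨C, hC⟩ := hbd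
  have hbounded : Bornology.IsBounded (range X) := by
    refine (Metric.isBounded_closedBall (x := 0) (r := |C|)).subset ?_
    rintro _ ⟨ω, rfl⟩
    rw [mem_closedBall_zero_iff, pi_norm_le_iff_of_nonneg (abs_nonneg C)]
    exact fun j => (hC ω j).trans (le_abs_self C)
  have hK : IsCompact (range X) := Metric.isCompact_of_isClosed_isBounded hclosed hbounded
  change IsCompact (barycenters X)
  rw [barycenters_eq_convexHull_range hX.stronglyMeasurable hK]
  exact hK.convexHull
end

section
/- Let (Ω, 𝒜) be a measurable space, μ a probability measure on Ω, d ≥ 1, and X : Ω → (Fin d → ℝ) a measurable function such that for every j : Fin d, either 0 ≤ X ω j for all ω, or X ω j ≤ 0 for all ω. Then for every ε > 0 and every M ∈ ℝ there exist n ≥ 1, points ω : Fin n → Ω and coefficients α : Fin n → ℝ with 0 ≤ α i for all i and ∑ i, α i = 1, such that for every j : Fin d: (a) if ω ↦ X ω j is μ-integrable, then |∑ i, α i * X (ω i) j − ∫ X · j ∂μ| ≤ ε; (b) if ω ↦ X ω j is not μ-integrable and 0 ≤ X · j, then M ≤ ∑ i, α i * X (ω i) j; (c) if ω ↦ X ω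 j is not μ-integrable and X · j ≤ 0, then ∑ i, α i * X (ω i) j ≤ −M. -/
open MeasureTheory

lemma trunc_big {Ω : Type*} [MeasurableSpace Ω] (μ : Measure Ω) [IsProbabilityMeasure μ]
    (f : Ω → ℝ) (hf : Measurable f) (hpos : ∀ ω, 0 ≤ f ω) (hni : ¬ Integrable f μ) (C : ℝ) :
    ∃ N : ℝ, 0 ≤ N ∧ C ≤ ∫ ω, min (f ω) N ∂μ := by
  have hlin : ∫⁻ ω, ENNReal.ofReal (f ω) ∂μ = ⊤ := by
    by_contra h
    apply hni
    refine ⟨hf.aestronglyMeasurable, ?_⟩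
    rw [hasFiniteIntegral_iff_norm]
    have : ∀ ω, ‖f ω‖ = f ω := fun ω => Real.norm_of_nonneg (hpos ω)
    simp_rw [this]
    exact lt_top_iff_ne_top.2 h
  set g : ℕ → Ω → ENNReal := fun n ω => min (ENNReal.ofReal (f ω)) n with hg
  have hgmono : Monotone g := by
    intro m n hmn ω
    exact min_le_min le_rfl (by exact_mod_cast Nat.cast_le.2 hmn)
  have hgmeas : ∀ n, Measurable (g n) := fun n =>
    (hf.ennreal_ofReal).min measurable_const
  have hsup : ∀ ω, (⨆ n, g n ω) = ENNReal.ofReal (f ω) := by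
    intro ω
    apply le_antisymm
    · exact iSup_le fun n => min_le_left _ _
    · obtain ⟨n, hn⟩ := exists_nat_ge (f ω)
      refine le_iSup_of_le n ?_
      simp only [hg, le_min_iff, le_refl, true_and]
      exact ENNReal.ofReal_le_ofReal hn |>.trans (by simp [ENNReal.ofReal_natCast])
  have hlim : (⨆ n, ∫⁻ ω, g n ω ∂μ) = ⊤ := by
    rw [← lintegral_iSup hgmeas (fun m n h => fun ω => hgmono h ω)]
    simp_rw [hsup]; exact hlin
  obtain ⟨n, hn⟩ : ∃ n, ENNReal.ofReal C < ∫⁻ ω, g n ω ∂μ := by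
    by_contra h
    push_neg at h
    have := iSup_le h
    rw [hlim] at this
    exact absurd this (by simp)
  refine ⟨n, Nat.cast_nonneg n, ?_⟩
  have hfin : ∫⁻ ω, g n ω ∂μ ≠ ⊤ := by
    refine ne_top_of_le_ne_top ?_ (lintegral_mono fun ω => min_le_right _ _)
    simp [lintegral_const]
  have heq : ∫ ω, min (f ω) (n : ℝ) ∂μ = (∫⁻ ω, g n ω ∂μ).toReal := by
    rw [integral_eq_lintegral_of_nonneg_ae]
    · congr 1
      apply lintegral_congr
      intro ω
      simp only [hg]
      rw [← ENNReal.ofReal_natCast n]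
      exact (Monotone.map_min (fun a b h => ENNReal.ofReal_le_ofReal h))
    · exact Filter.Eventually.of_forall fun ω => le_min (hpos ω) (Nat.cast_nonneg n)
    · exact (hf.min measurable_const).aestronglyMeasurable
  rw [heq]
  rcases le_or_gt C 0 with hC | hC
  · exact hC.trans ENNReal.toReal_nonneg
  · calc C = (ENNReal.ofReal C).toReal := by rw [ENNReal.toReal_ofReal hC.le]
      _ ≤ _ := ENNReal.toReal_mono hfin hn.le

theorem stmt5 {Ω : Type*} [MeasurableSpace Ω] (μ : Measure Ω) [IsProbabilityMeasure μ]
    (d : ℕ) (hd : 1 ≤ d) (X : Ω → (Fin d → ℝ)) (hX : Measurable X)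
    (hsign : ∀ j : Fin d, (∀ ω, 0 ≤ X ω j) ∨ (∀ ω, X ω j ≤ 0)) :
    ∀ ε > (0 : ℝ), ∀ M : ℝ, ∃ n : ℕ, 1 ≤ n ∧ ∃ p : Fin n → Ω, ∃ α : Fin n → ℝ,
      (∀ i, 0 ≤ α i) ∧ (∑ i, α i = 1) ∧
      ∀ j : Fin d,
        (Integrable (fun ω => X ω j) μ →
          |(∑ i, α i * X (p i) j) - ∫ ω, X ω j ∂μ| ≤ ε) ∧
        (¬ Integrable (fun ω => X ω j) μ → (∀ ω, 0 ≤ X ω j) →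
          M ≤ ∑ i, α i * X (p i) j) ∧
        (¬ Integrable (fun ω => X ω j) μ → (∀ ω, X ω j ≤ 0) →
          (∑ i, α i * X (p i) j) ≤ -M) := by
  intro ε hε M
  have hXj : ∀ j : Fin d, Measurable (fun ω => X ω j) :=
    fun j => (measurable_pi_apply j).comp hX
  -- build the coordinatewise modification Y j
  have H : ∀ j : Fin d, ∃ Y : Ω → ℝ, Measurable Y ∧ Integrable Y μ ∧
      (Integrable (fun ω => X ω j) μ → Y = fun ω => X ω j) ∧
      (¬ Integrable (fun ω => X ω j) μ → (∀ ω, 0 ≤ X ω j) →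
        (∀ ω, Y ω ≤ X ω j) ∧ M + ε ≤ ∫ ω, Y ω ∂μ) ∧
      (¬ Integrable (fun ω => X ω j) μ → (∀ ω, X ω j ≤ 0) →
        (∀ ω, X ω j ≤ Y ω) ∧ ∫ ω, Y ω ∂μ ≤ -(M + ε)) := by
    intro j
    by_cases hint : Integrable (fun ω => X ω j) μ
    · exact ⟨fun ω => X ω j, hXj j, hint, fun _ => rfl,
        fun h => absurd hint h, fun h => absurd hint h⟩
    rcases hsign j with hpos | hneg
    · obtain ⟨N, hN0, hNint⟩ := trunc_big μ _ (hXj j) hpos hint (M + ε)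
      refine ⟨fun ω => min (X ω j) N, (hXj j).min measurable_const, ?_, ?_, ?_, ?_⟩
      · refine ⟨((hXj j).min measurable_const).aestronglyMeasurable,
          HasFiniteIntegral.of_bounded (C := N) (Filter.Eventually.of_forall fun ω => ?_)⟩
        rw [Real.norm_of_nonneg (le_min (hpos ω) hN0)]
        exact min_le_right _ _
      · exact fun h => absurd h hint
      · exact fun _ _ => ⟨fun ω => min_le_left _ _, hNint⟩
      · intro _ hneg'
        exact absurd (by
          have : (fun ω => X ω j) = fun _ => (0 : ℝ) :=
            funext fun ω => le_antisymm (hneg' ω) (hpos ω)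
          rw [this]; exact integrable_const 0) hint
    · have hint' : ¬ Integrable (fun ω => -X ω j) μ := by
        intro h
        apply hint
        have h2 := h.neg
        convert h2 using 1
        funext ω; simp
      obtain ⟨N, hN0, hNint⟩ := trunc_big μ (fun ω => -X ω j) (hXj j).neg
        (fun ω => neg_nonneg.2 (hneg ω)) hint' (M + ε)
      refine ⟨fun ω => max (X ω j) (-N), (hXj j).max measurable_const, ?_, ?_, ?_, ?_⟩
      · refine ⟨((hXj j).max measurable_const).aestronglyMeasurable,
          HasFiniteIntegral.of_bounded (C := N) (Filter.Eventually.of_forall fun ω => ?_)⟩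
        have h1 : max (X ω j) (-N) ≤ 0 := max_le (hneg ω) (neg_nonpos.2 hN0)
        have h2 : -N ≤ max (X ω j) (-N) := le_max_right _ _
        rw [Real.norm_of_nonpos h1]
        linarith
      · exact fun h => absurd h hint
      · intro _ hpos'
        exact absurd (by
          have : (fun ω => X ω j) = fun _ => (0 : ℝ) :=
            funext fun ω => le_antisymm (hneg ω) (hpos' ω)
          rw [this]; exact integrable_const 0) hint
      · intro _ _
        refine ⟨fun ω => le_max_left _ _, ?_⟩
        have hmm : ∀ ω, max (X ω j) (-N) = -(min (-X ω j) N) := by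
          intro ω; rw [neg_inf, neg_neg]
        simp_rw [hmm]
        rw [integral_neg]
        linarith
  choose Y hYmeas hYint hY1 hY2 hY3 using H
  set Z : Ω → (Fin d → ℝ) := fun ω j => Y j ω with hZdef
  have hZmeas : Measurable Z := measurable_pi_lambda _ fun j => hYmeas j
  have hZint : Integrable Z μ := by
    have hb : Integrable (fun ω => ∑ j : Fin d, |Y j ω|) μ :=
      integrable_finset_sum _ fun j _ => (hYint j).abs
    refine hb.mono' hZmeas.aestronglyMeasurable (Filter.Eventually.of_forall fun ω => ?_)
    rw [pi_norm_le_iff_of_nonneg (Finset.sum_nonneg fun j _ => abs_nonneg _)]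
    intro j
    rw [Real.norm_eq_abs]
    exact Finset.single_le_sum (fun j _ => abs_nonneg (Y j ω)) (Finset.mem_univ j)
  have hmem : (∫ ω, Z ω ∂μ) ∈ closure (convexHull ℝ (Set.range Z)) :=
    ((convex_convexHull ℝ _).closure).integral_mem isClosed_closure
      (Filter.Eventually.of_forall fun ω =>
        subset_closure (subset_convexHull ℝ _ (Set.mem_range_self ω))) hZint
  obtain ⟨v, hv_mem, hv_dist⟩ := Metric.mem_closure_iff.1 hmem ε hε
  rw [convexHull_eq] at hv_mem
  obtain ⟨ι, t, w, z, hw0, hw1, hz, hcm⟩ := hv_mem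
  have htne : t.Nonempty := by
    rcases Finset.eq_empty_or_nonempty t with h | h
    · rw [h, Finset.sum_empty] at hw1; exact absurd hw1 (by norm_num)
    · exact h
  set n := t.card with hn
  have hn1 : 1 ≤ n := Finset.card_pos.2 htne
  set e : t ≃ Fin n := t.equivFin with he
  have hq : ∀ x : t, ∃ ω : Ω, Z ω = z ↑x := fun x => hz ↑x x.2
  choose q hqz using hq
  refine ⟨n, hn1, fun i => q (e.symm i), fun i => w ↑(e.symm i), fun i => hw0 _ (e.symm i).2, ?_, ?_⟩
  · rw [Fintype.sum_equiv e.symm (fun i => w ↑(e.symm i)) (fun x : t => w ↑x) fun i => rfl,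
      Finset.sum_coe_sort t w]
    exact hw1
  intro j
  have hvj : ∀ j' : Fin d, v j' = ∑ i : Fin n, w ↑(e.symm i) * Z (q (e.symm i)) j' := by
    intro j'
    rw [← hcm, Finset.centerMass_eq_of_sum_1 _ _ hw1]
    have e1 : ∑ i : Fin n, w ↑(e.symm i) * Z (q (e.symm i)) j'
        = ∑ x : t, w ↑x * Z (q x) j' :=
      Equiv.sum_comp e.symm (fun x : t => w ↑x * Z (q x) j')
    have e2 : ∑ x : t, w ↑x * Z (q x) j' = ∑ x : t, w ↑x * z ↑x j' := by
      refine Finset.sum_congr rfl fun x _ => ?_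
      rw [hqz x]
    rw [e1, e2, Finset.sum_coe_sort t (fun y => w y * z y j')]
    simp [Finset.sum_apply]
  have hdistj : |(∫ ω, Z ω ∂μ) j - v j| ≤ ε := by
    have := dist_le_pi_dist (∫ ω, Z ω ∂μ) v j
    rw [Real.dist_eq] at this
    exact this.trans hv_dist.le
  have hIntj : (∫ ω, Z ω ∂μ) j = ∫ ω, Y j ω ∂μ := by
    have := (ContinuousLinearMap.proj (R := ℝ) (φ := fun _ : Fin d => ℝ) j).integral_comp_comm hZint
    simpa [hZdef] using this.symm
  refine ⟨?_, ?_, ?_⟩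
  · intro hint
    have hy : Y j = fun ω => X ω j := hY1 j hint
    have hsum : ∑ i : Fin n, w ↑(e.symm i) * X (q (e.symm i)) j = v j := by
      rw [hvj j]
      refine Finset.sum_congr rfl fun i _ => ?_
      simp [hZdef, hy]
    have h2 : ∫ ω, X ω j ∂μ = (∫ ω, Z ω ∂μ) j := by rw [hIntj, hy]
    rw [hsum, h2, abs_sub_comm]
    exact hdistj
  · intro hint hpos
    obtain ⟨hle, hbig⟩ := hY2 j hint hpos
    have h1 : v j ≤ ∑ i : Fin n, w ↑(e.symm i) * X (q (e.symm i)) j := by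
      rw [hvj j]
      refine Finset.sum_le_sum fun i _ => ?_
      exact mul_le_mul_of_nonneg_left (hle _) (hw0 _ (e.symm i).2)
    have h2 : (∫ ω, Z ω ∂μ) j - ε ≤ v j := by
      have := abs_sub_le_iff.1 hdistj
      linarith [this.1]
    rw [hIntj] at h2
    linarith
  · intro hint hneg
    obtain ⟨hle, hsmall⟩ := hY3 j hint hneg
    have h1 : (∑ i : Fin n, w ↑(e.symm i) * X (q (e.symm i)) j) ≤ v j := by
      rw [hvj j]
      refine Finset.sum_le_sum fun i _ => ?_
      exact mul_le_mul_of_nonneg_left (hle _) (hw0 _ (e.symm i).2)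
    have h2 : v j ≤ (∫ ω, Z ω ∂μ) j + ε := by
      have := abs_sub_le_iff.1 hdistj
      linarith [this.2]
    rw [hIntj] at h2
    linarith
end

section
/- Let d ≥ 1 and m be natural numbers, and let v : Fin m → (Fin d → EReal) be such that for every j : Fin d, either v i j ≠ ⊥ for all i, or v i j ≠ ⊤ for all i. Let α : Fin m → ℝ with 0 ≤ α i for all i and ∑ i, α i = 1. Then there exist β, γ : Fin m → ℝ with 0 ≤ β i, 0 ≤ γ i, ∑ i, β i = 1, ∑ i, γ i = 1, at most d+1 indices i with β i ≠ 0, and at most d indices i with γ i ≠ 0, such that for every j : Fin d one has ∑ i, (β i : EReal) * v i j = ∑ i, (α i : EReal) * v i j and ∑ i, (α i : EReal) * v i j ≤ ∑ i, (γ i : EReal) * v i j. -/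
open Finset

section ERealLemmas

variable {ι : Type*}

lemma ereal_coe_sum (s : Finset ι) (f : ι → ℝ) :
    ((∑ i ∈ s, f i : ℝ) : EReal) = ∑ i ∈ s, ((f i : ℝ) : EReal) := by
  classical
  induction s using Finset.induction with
  | empty => simp
  | @insert a s ha ih => rw [Finset.sum_insert ha, Finset.sum_insert ha, EReal.coe_add, ih]

lemma ereal_sum_ne_bot (s : Finset ι) (f : ι → EReal) (hb : ∀ i ∈ s, f i ≠ ⊥) :
    ∑ i ∈ s, f i ≠ ⊥ := by
  classical
  induction s using Finset.induction with
  | empty => simp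
  | @insert a s ha ih =>
    rw [Finset.sum_insert ha]
    rw [Ne, EReal.add_eq_bot_iff]
    push_neg
    exact ⟨hb a (Finset.mem_insert_self a s),
      ih fun i hi => hb i (Finset.mem_insert_of_mem hi)⟩

lemma ereal_sum_eq_top (s : Finset ι) (f : ι → EReal) (hb : ∀ i ∈ s, f i ≠ ⊥)
    (ht : ∃ i ∈ s, f i = ⊤) : ∑ i ∈ s, f i = ⊤ := by
  classical
  induction s using Finset.induction with
  | empty => simp at ht
  | @insert a s ha ih =>
    rw [Finset.sum_insert ha]
    obtain ⟨i, his, hit⟩ := ht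
    rcases Finset.mem_insert.1 his with rfl | his'
    · rw [hit]
      exact EReal.top_add_of_ne_bot
        (ereal_sum_ne_bot s f fun i hi => hb i (Finset.mem_insert_of_mem hi))
    · rw [ih (fun i hi => hb i (Finset.mem_insert_of_mem hi)) ⟨i, his', hit⟩]
      exact EReal.add_top_of_ne_bot (hb a (Finset.mem_insert_self a s))
  
lemma ereal_sum_eq_bot (s : Finset ι) (f : ι → EReal) (ht : ∃ i ∈ s, f i = ⊥) :
    ∑ i ∈ s, f i = ⊥ := by
  classical
  induction s using Finset.induction with
  | empty => simp at ht
  | @insert a s ha ih =>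
    rw [Finset.sum_insert ha]
    obtain ⟨i, his, hit⟩ := ht
    rcases Finset.mem_insert.1 his with rfl | his'
    · rw [hit, EReal.bot_add]
    · rw [ih ⟨i, his', hit⟩, EReal.add_bot]

lemma ereal_term_ne_bot {b : ℝ} (hb : 0 ≤ b) {w : EReal} (hw : w ≠ ⊥) :
    (b : EReal) * w ≠ ⊥ := by
  rcases eq_or_lt_of_le hb with rfl | hb'
  · simp
  · induction w using EReal.rec with
    | bot => exact absurd rfl hw
    | coe r => rw [← EReal.coe_mul]; exact EReal.coe_ne_bot _
    | top =>
      rw [EReal.coe_mul_top_of_pos hb']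
      simp

lemma ereal_term_ne_top {b : ℝ} (hb : 0 ≤ b) {w : EReal} (hw : w ≠ ⊤) :
    (b : EReal) * w ≠ ⊤ := by
  rcases eq_or_lt_of_le hb with rfl | hb'
  · simp
  · induction w using EReal.rec with
    | top => exact absurd rfl hw
    | coe r => rw [← EReal.coe_mul]; exact EReal.coe_ne_top _
    | bot =>
      rw [EReal.coe_mul_bot_of_pos hb']
      simp

lemma ereal_sum_real {m : ℕ} (β : Fin m → ℝ) (w : Fin m → EReal) (hβ : ∀ i, 0 ≤ β i)
    (hfin : ∀ i, β i ≠ 0 → (w i ≠ ⊥ ∧ w i ≠ ⊤)) :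
    ∑ i, (β i : EReal) * w i = ((∑ i, β i * (w i).toReal : ℝ) : EReal) := by
  rw [ereal_coe_sum]
  apply Finset.sum_congr rfl
  intro i _
  by_cases hi : β i = 0
  · simp [hi]
  · obtain ⟨h1, h2⟩ := hfin i hi
    rw [← EReal.coe_toReal h2 h1, ← EReal.coe_mul, EReal.toReal_coe]

end ERealLemmas

section Cara

variable {m d : ℕ}

lemma exists_neg_of_sum_eq_zero {c : Fin m → ℝ} (hsum : ∑ i, c i = 0) {i₀ : Fin m}
    (hne : c i₀ ≠ 0) : ∃ i, c i < 0 := by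
  by_contra h
  push_neg at h
  have : ∀ i ∈ Finset.univ, c i = 0 := by
    intro i _
    have := (Finset.sum_eq_zero_iff_of_nonneg (fun i _ => h i)).1 hsum
    exact this i (Finset.mem_univ i)
  exact hne (this i₀ (Finset.mem_univ i₀))

lemma exists_c (hd : 1 ≤ d) (u : Fin m → Fin d → ℝ) (s : Finset (Fin m))
    (hs : d + 1 ≤ s.card) :
    ∃ c : Fin m → ℝ, (∀ i, c i ≠ 0 → i ∈ s) ∧ ∑ i, c i = 0 ∧ (∃ i, c i < 0) ∧
      (∀ j, 0 ≤ ∑ i, c i * u i j) ∧ (d + 2 ≤ s.card → ∀ j, ∑ i, c i * u i j = 0) := by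
  classical
  set φ : Fin m → (Fin d → ℝ) × ℝ := fun i => (u i, 1) with hφ
  have hrank : Module.finrank ℝ ((Fin d → ℝ) × ℝ) = d + 1 := by
    rw [Module.finrank_prod, Module.finrank_pi, Module.finrank_self]
    simp
  -- helper to pass from g : ↥s → ℝ to c : Fin m → ℝ
  have key : ∀ g : ↥s → ℝ, ∃ c : Fin m → ℝ, (∀ i, c i ≠ 0 → i ∈ s) ∧
      (∀ i : ↥s, c i = g i) ∧ ∑ i, c i • φ i = ∑ i : ↥s, g i • φ (i : Fin m) := by
    intro g
    refine ⟨fun i => if h : i ∈ s then g ⟨i, h⟩ else 0, ?_, ?_, ?_⟩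
    · intro i hi
      by_contra h
      simp [h] at hi
    · intro i; simp [i.2]
    · calc ∑ i : Fin m, (if h : i ∈ s then g ⟨i, h⟩ else 0) • φ i
          = ∑ i ∈ s, (if h : i ∈ s then g ⟨i, h⟩ else 0) • φ i :=
            (Finset.sum_subset (Finset.subset_univ s) (by intro x _ hx; simp [hx])).symm
        _ = ∑ i ∈ s.attach, (if h : (i : Fin m) ∈ s then g ⟨i, h⟩ else 0) • φ i :=
            (Finset.sum_attach s _).symm
        _ = ∑ i : ↥s, g i • φ (i : Fin m) := by
            rw [Finset.univ_eq_attach]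
            apply Finset.sum_congr rfl
            intro i _
            simp [i.2]
  have comp2 : ∀ c : Fin m → ℝ, (∑ i, c i • φ i).2 = ∑ i, c i := by
    intro c
    rw [Prod.snd_sum]
    apply Finset.sum_congr rfl
    intro i _
    simp [hφ]
  have comp1 : ∀ (c : Fin m → ℝ) (j : Fin d), (∑ i, c i • φ i).1 j = ∑ i, c i * u i j := by
    intro c j
    rw [Prod.fst_sum, Finset.sum_apply]
    apply Finset.sum_congr rfl
    intro i _
    simp [hφ, mul_comm]
  by_cases hind : LinearIndependent ℝ (fun i : ↥s => φ (i : Fin m))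
  · -- independent case: s has exactly d+1 elements and φ|s is a basis
    have hcard : Fintype.card ↥s = d + 1 := by
      have h1 : Fintype.card ↥s ≤ d + 1 := by
        rw [← hrank]
        exact hind.fintype_card_le_finrank
      have h2 : Fintype.card ↥s = s.card := Fintype.card_coe s
      omega
    have hne : Nonempty ↥s := by
      rw [← Fintype.card_pos_iff, hcard]; omega
    let b := basisOfLinearIndependentOfCardEqFinrank hind (by rw [hcard, hrank])
    have hb : ∀ i, b i = φ (i : Fin m) :=
      fun i => congrFun (coe_basisOfLinearIndependentOfCardEqFinrank hind _) i
    set y : (Fin d → ℝ) × ℝ := (fun _ => 1, 0) with hy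
    obtain ⟨c, hc1, hc2, hc3⟩ := key (b.repr y)
    have hcy : ∑ i, c i • φ i = y := by
      rw [hc3]
      conv_rhs => rw [← b.sum_repr y]
      apply Finset.sum_congr rfl
      intro i _
      rw [hb]
    have hsum : ∑ i, c i = 0 := by
      have := congrArg Prod.snd hcy
      rw [comp2] at this
      simpa [hy] using this
    have hval : ∀ j, ∑ i, c i * u i j = 1 := by
      intro j
      have := congrArg (fun z => z.1 j) hcy
      rw [comp1] at this
      simpa [hy] using this
    have hcne : c ≠ 0 := by
      intro h
      have := hval ⟨0, by omega⟩
      rw [h] at this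
      simp at this
    obtain ⟨i₀, hi₀⟩ : ∃ i, c i ≠ 0 := by
      by_contra h
      push_neg at h
      exact hcne (funext h)
    refine ⟨c, hc1, hsum, exists_neg_of_sum_eq_zero hsum hi₀, ?_, ?_⟩
    · intro j; rw [hval j]; norm_num
    · intro habs
      have := Fintype.card_coe s
      omega
  · -- dependent case
    obtain ⟨g, hg0, i₁, hgi₁⟩ := Fintype.not_linearIndependent_iff.1 hind
    obtain ⟨c, hc1, hc2, hc3⟩ := key g
    have hcy : ∑ i, c i • φ i = 0 := by rw [hc3]; exact hg0
    have hsum : ∑ i, c i = 0 := by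
      have := congrArg Prod.snd hcy
      rw [comp2] at this
      simpa using this
    have hval : ∀ j, ∑ i, c i * u i j = 0 := by
      intro j
      have := congrArg (fun z => z.1 j) hcy
      rw [comp1] at this
      simpa using this
    have hi₀ : c (i₁ : Fin m) ≠ 0 := by rw [hc2 i₁]; exact hgi₁
    exact ⟨c, hc1, hsum, exists_neg_of_sum_eq_zero hsum hi₀,
      fun j => le_of_eq (hval j).symm, fun _ => hval⟩

lemma step_lemma (γ c : Fin m → ℝ) (hγ : ∀ i, 0 ≤ γ i)
    (hsupp : ∀ i, c i ≠ 0 → γ i ≠ 0) {i₀ : Fin m} (hneg : c i₀ < 0) :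
    ∃ (γ' : Fin m → ℝ) (t : ℝ), 0 ≤ t ∧ (∀ i, 0 ≤ γ' i) ∧
      (∀ i, γ' i = γ i + t * c i) ∧ {i | γ' i ≠ 0} ⊂ {i | γ i ≠ 0} := by
  classical
  set S : Finset (Fin m) := Finset.univ.filter (fun i => c i < 0) with hS
  have hSne : S.Nonempty := ⟨i₀, by simp [hS, hneg]⟩
  set t : ℝ := S.inf' hSne (fun i => γ i / (-c i)) with ht
  have hmem : ∀ i ∈ S, c i < 0 := by intro i hi; simpa [hS] using hi
  have ht0 : 0 ≤ t := by
    apply Finset.le_inf'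
    intro i hi
    exact div_nonneg (hγ i) (by linarith [hmem i hi])
  set γ' : Fin m → ℝ := fun i => γ i + t * c i with hγ'
  have hnonneg : ∀ i, 0 ≤ γ' i := by
    intro i
    rcases le_or_gt 0 (c i) with h | h
    · have : 0 ≤ t * c i := mul_nonneg ht0 h
      simp only [hγ']; linarith [hγ i]
    · have hiS : i ∈ S := by simp [hS, h]
      have hle : t ≤ γ i / (-c i) := Finset.inf'_le _ hiS
      have hpos : 0 < -c i := by linarith
      rw [le_div_iff₀ hpos] at hle
      simp only [hγ']
      nlinarith
  obtain ⟨i₁, hi₁S, hmin⟩ := Finset.exists_mem_eq_inf' hSne (fun i => γ i / (-c i))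
  have hci₁ : c i₁ < 0 := hmem i₁ hi₁S
  have hγ'i₁ : γ' i₁ = 0 := by
    have htval : t = γ i₁ / -c i₁ := hmin
    simp only [hγ']
    rw [htval]
    have hne : c i₁ ≠ 0 := ne_of_lt hci₁
    rw [div_neg, ← neg_div, div_mul_cancel₀ _ hne]
    ring
  have hsub : {i | γ' i ≠ 0} ⊆ {i | γ i ≠ 0} := by
    intro i hi
    simp only [Set.mem_setOf_eq] at hi ⊢
    by_cases hc : c i = 0
    · simp only [hγ', hc, mul_zero, add_zero] at hi
      exact hi
    · exact hsupp i hc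
  have hγi₁ : γ i₁ ≠ 0 := hsupp i₁ (ne_of_lt hci₁)
  exact ⟨γ', t, ht0, hnonneg, fun i => rfl, (Set.ssubset_iff_of_subset hsub).2 ⟨i₁, hγi₁, by simp [hγ'i₁]⟩⟩

lemma ncard_eq_filter_card (γ : Fin m → ℝ) :
    {i | γ i ≠ 0}.ncard = (Finset.univ.filter (fun i => γ i ≠ 0)).card := by
  classical
  rw [← Set.ncard_coe_finset]
  congr 1
  ext i
  simp

lemma cara_ge (hd : 1 ≤ d) (u : Fin m → Fin d → ℝ) :
    ∀ (n : ℕ) (α : Fin m → ℝ), {i | α i ≠ 0}.ncard ≤ n → (∀ i, 0 ≤ α i) →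
    ∃ γ : Fin m → ℝ, (∀ i, 0 ≤ γ i) ∧ (∑ i, γ i = ∑ i, α i) ∧
      (∀ i, γ i ≠ 0 → α i ≠ 0) ∧ {i | γ i ≠ 0}.ncard ≤ d ∧
      ∀ j, ∑ i, α i * u i j ≤ ∑ i, γ i * u i j := by
  classical
  intro n
  induction n with
  | zero =>
    intro α hcard hα
    exact ⟨α, hα, rfl, fun _ h => h, by omega, fun j => le_refl _⟩
  | succ n ih =>
    intro α hcard hα
    by_cases hle : {i | α i ≠ 0}.ncard ≤ d
    · exact ⟨α, hα, rfl, fun _ h => h, hle, fun j => le_refl _⟩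
    · push_neg at hle
      set s := Finset.univ.filter (fun i => α i ≠ 0) with hsdef
      have hs : d + 1 ≤ s.card := by
        rw [hsdef, ← ncard_eq_filter_card]; omega
      obtain ⟨c, hc1, hc2, ⟨i₀, hneg⟩, hge, _⟩ := exists_c hd u s hs
      have hsupp : ∀ i, c i ≠ 0 → α i ≠ 0 := fun i h =>
        (Finset.mem_filter.1 (hc1 i h)).2
      obtain ⟨γ', t, ht0, hnn, hformula, hss⟩ := step_lemma α c hα hsupp hneg
      have hcard' : {i | γ' i ≠ 0}.ncard ≤ n := by
        have := Set.ncard_lt_ncard hss (Set.toFinite _)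
        omega
      obtain ⟨γ, h1, h2, h3, h4, h5⟩ := ih γ' hcard' hnn
      have hsumγ' : ∑ i, γ' i = ∑ i, α i := by
        calc ∑ i, γ' i = ∑ i, (α i + t * c i) :=
              Finset.sum_congr rfl fun i _ => hformula i
        _ = ∑ i, α i + t * ∑ i, c i := by
              rw [Finset.sum_add_distrib, Finset.mul_sum]
        _ = ∑ i, α i := by rw [hc2, mul_zero, add_zero]
      refine ⟨γ, h1, h2.trans hsumγ', ?_, h4, ?_⟩
      · intro i h
        exact hss.subset (h3 i h)
      · intro j
        have e : ∑ i, γ' i * u i j = ∑ i, α i * u i j + t * ∑ i, c i * u i j := by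
          calc ∑ i, γ' i * u i j = ∑ i, (α i * u i j + t * (c i * u i j)) := by
                apply Finset.sum_congr rfl
                intro i _
                rw [hformula i]; ring
          _ = ∑ i, α i * u i j + t * ∑ i, c i * u i j := by
                rw [Finset.sum_add_distrib, Finset.mul_sum]
        have h6 : ∑ i, α i * u i j ≤ ∑ i, γ' i * u i j := by
          rw [e]
          have := mul_nonneg ht0 (hge j)
          linarith
        exact h6.trans (h5 j)

lemma cara_eq (hd : 1 ≤ d) (u : Fin m → Fin d → ℝ) :
    ∀ (n : ℕ) (α : Fin m → ℝ), {i | α i ≠ 0}.ncard ≤ n → (∀ i, 0 ≤ α i) →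
    ∃ β : Fin m → ℝ, (∀ i, 0 ≤ β i) ∧ (∑ i, β i = ∑ i, α i) ∧
      (∀ i, β i ≠ 0 → α i ≠ 0) ∧ {i | β i ≠ 0}.ncard ≤ d + 1 ∧
      ∀ j, ∑ i, β i * u i j = ∑ i, α i * u i j := by
  classical
  intro n
  induction n with
  | zero =>
    intro α hcard hα
    exact ⟨α, hα, rfl, fun _ h => h, by omega, fun j => rfl⟩
  | succ n ih =>
    intro α hcard hα
    by_cases hle : {i | α i ≠ 0}.ncard ≤ d + 1
    · exact ⟨α, hα, rfl, fun _ h => h, hle, fun j => rfl⟩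
    · push_neg at hle
      set s := Finset.univ.filter (fun i => α i ≠ 0) with hsdef
      have hs2 : d + 2 ≤ s.card := by
        rw [hsdef, ← ncard_eq_filter_card]; omega
      obtain ⟨c, hc1, hc2, ⟨i₀, hneg⟩, _, heq0⟩ := exists_c hd u s (by omega)
      have heq := heq0 hs2
      have hsupp : ∀ i, c i ≠ 0 → α i ≠ 0 := fun i h =>
        (Finset.mem_filter.1 (hc1 i h)).2
      obtain ⟨γ', t, ht0, hnn, hformula, hss⟩ := step_lemma α c hα hsupp hneg
      have hcard' : {i | γ' i ≠ 0}.ncard ≤ n := by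
        have := Set.ncard_lt_ncard hss (Set.toFinite _)
        omega
      obtain ⟨β, h1, h2, h3, h4, h5⟩ := ih γ' hcard' hnn
      have hsumγ' : ∑ i, γ' i = ∑ i, α i := by
        calc ∑ i, γ' i = ∑ i, (α i + t * c i) :=
              Finset.sum_congr rfl fun i _ => hformula i
        _ = ∑ i, α i + t * ∑ i, c i := by
              rw [Finset.sum_add_distrib, Finset.mul_sum]
        _ = ∑ i, α i := by rw [hc2, mul_zero, add_zero]
      refine ⟨β, h1, h2.trans hsumγ', ?_, h4, ?_⟩
      · intro i h
        exact hss.subset (h3 i h)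
      · intro j
        have e : ∑ i, γ' i * u i j = ∑ i, α i * u i j := by
          calc ∑ i, γ' i * u i j = ∑ i, (α i * u i j + t * (c i * u i j)) := by
                apply Finset.sum_congr rfl
                intro i _
                rw [hformula i]; ring
          _ = ∑ i, α i * u i j + t * ∑ i, c i * u i j := by
                rw [Finset.sum_add_distrib, Finset.mul_sum]
          _ = ∑ i, α i * u i j := by rw [heq j, mul_zero, add_zero]
        rw [h5 j, e]

end Cara

section Bridge

variable {m : ℕ}

open Classical in
noncomputable def uco (α : Fin m → ℝ) (w : Fin m → EReal) (i : Fin m) : ℝ :=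
  if ∃ k, α k ≠ 0 ∧ w k = ⊤ then (if w i = ⊤ then 1 else 0)
  else if ∃ k, α k ≠ 0 ∧ w k = ⊥ then (if w i = ⊥ then -1 else 0)
  else (w i).toReal

lemma uco_top_pos (α : Fin m → ℝ) (w : Fin m → EReal) (hα : ∀ i, 0 ≤ α i)
    {k : Fin m} (hk : α k ≠ 0) (hwk : w k = ⊤)
    (huco : ∀ i, uco α w i = if w i = ⊤ then 1 else 0) :
    0 < ∑ i, α i * uco α w i := by
  have h1 : α k * uco α w k ≤ ∑ i, α i * uco α w i := by
    apply Finset.single_le_sum (f := fun i => α i * uco α w i)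
    · intro i _
      apply mul_nonneg (hα i)
      rw [huco i]
      split <;> norm_num
    · exact Finset.mem_univ k
  have hk' : 0 < α k := lt_of_le_of_ne (hα k) (Ne.symm hk)
  rw [huco k, if_pos hwk, mul_one] at h1
  linarith

lemma uco_bot_neg (α : Fin m → ℝ) (w : Fin m → EReal) (δ : Fin m → ℝ) (hδ : ∀ i, 0 ≤ δ i)
    {k : Fin m} (hk : δ k ≠ 0) (hwk : w k = ⊥)
    (huco : ∀ i, uco α w i = if w i = ⊥ then -1 else 0) :
    ∑ i, δ i * uco α w i < 0 := by
  have h1 : ∑ i, δ i * uco α w i ≤ ∑ i, if i = k then δ k * uco α w k else 0 := by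
    apply Finset.sum_le_sum
    intro i _
    by_cases h' : i = k
    · subst h'; simp
    · rw [if_neg h']
      apply mul_nonpos_of_nonneg_of_nonpos (hδ i)
      rw [huco i]
      split <;> norm_num
  have h2 : ∑ i, (if i = k then δ k * uco α w k else 0) = δ k * uco α w k := by
    simp
  have hk' : 0 < δ k := lt_of_le_of_ne (hδ k) (Ne.symm hk)
  rw [h2, huco k, if_pos hwk] at h1
  nlinarith

lemma ereal_sum_top_of_wit (β : Fin m → ℝ) (w : Fin m → EReal) (hβ : ∀ i, 0 ≤ β i)
    (hnb : ∀ i, w i ≠ ⊥) {i₁ : Fin m} (hi₁ : β i₁ ≠ 0) (hw₁ : w i₁ = ⊤) :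
    ∑ i, (β i : EReal) * w i = ⊤ := by
  apply ereal_sum_eq_top _ _ (fun i _ => ereal_term_ne_bot (hβ i) (hnb i))
  exact ⟨i₁, Finset.mem_univ _, by
    rw [hw₁]; exact EReal.coe_mul_top_of_pos (lt_of_le_of_ne (hβ i₁) (Ne.symm hi₁))⟩

lemma bridge_eq (w : Fin m → EReal) (hw : (∀ i, w i ≠ ⊥) ∨ (∀ i, w i ≠ ⊤))
    (α β : Fin m → ℝ) (hα : ∀ i, 0 ≤ α i) (hβ : ∀ i, 0 ≤ β i)
    (hs : ∀ i, β i ≠ 0 → α i ≠ 0)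
    (h : ∑ i, β i * uco α w i = ∑ i, α i * uco α w i) :
    ∑ i, (β i : EReal) * w i = ∑ i, (α i : EReal) * w i := by
  classical
  by_cases hPT : ∃ k, α k ≠ 0 ∧ w k = ⊤
  · obtain ⟨k, hk, hwk⟩ := hPT
    have hnb : ∀ i, w i ≠ ⊥ := by
      rcases hw with h' | h'
      · exact h'
      · exact absurd hwk (h' k)
    have huco : ∀ i, uco α w i = if w i = ⊤ then 1 else 0 := by
      intro i; unfold uco; rw [if_pos ⟨k, hk, hwk⟩]
    have hαpos := uco_top_pos α w hα hk hwk huco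
    have hβwit : ∃ i, β i ≠ 0 ∧ w i = ⊤ := by
      by_contra hcon
      push_neg at hcon
      have hz : ∑ i, β i * uco α w i = 0 := by
        apply Finset.sum_eq_zero
        intro i _
        by_cases hb : β i = 0
        · rw [hb, zero_mul]
        · rw [huco i, if_neg (hcon i hb), mul_zero]
      rw [hz] at h
      linarith
    obtain ⟨i₁, hi₁, hwi₁⟩ := hβwit
    rw [ereal_sum_top_of_wit β w hβ hnb hi₁ hwi₁,
      ereal_sum_top_of_wit α w hα hnb hk hwk]
  · by_cases hPB : ∃ k, α k ≠ 0 ∧ w k = ⊥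
    · obtain ⟨k, hk, hwk⟩ := hPB
      have huco : ∀ i, uco α w i = if w i = ⊥ then -1 else 0 := by
        intro i; unfold uco; rw [if_neg hPT, if_pos ⟨k, hk, hwk⟩]
      have hαneg := uco_bot_neg α w α hα hk hwk huco
      have hβwit : ∃ i, β i ≠ 0 ∧ w i = ⊥ := by
        by_contra hcon
        push_neg at hcon
        have hz : ∑ i, β i * uco α w i = 0 := by
          apply Finset.sum_eq_zero
          intro i _
          by_cases hb : β i = 0
          · rw [hb, zero_mul]
          · rw [huco i, if_neg (hcon i hb), mul_zero]
        rw [hz] at h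
        linarith
      obtain ⟨i₁, hi₁, hwi₁⟩ := hβwit
      rw [ereal_sum_eq_bot _ _ ⟨i₁, Finset.mem_univ _, by
          rw [hwi₁]; exact EReal.coe_mul_bot_of_pos (lt_of_le_of_ne (hβ i₁) (Ne.symm hi₁))⟩,
        ereal_sum_eq_bot _ _ ⟨k, Finset.mem_univ _, by
          rw [hwk]; exact EReal.coe_mul_bot_of_pos (lt_of_le_of_ne (hα k) (Ne.symm hk))⟩]
    · push_neg at hPT hPB
      have hfin : ∀ i, α i ≠ 0 → (w i ≠ ⊥ ∧ w i ≠ ⊤) :=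
        fun i hi => ⟨hPB i hi, hPT i hi⟩
      have huco : ∀ i, uco α w i = (w i).toReal := by
        intro i; unfold uco
        rw [if_neg (by push_neg; intro k hk; exact hPT k hk),
          if_neg (by push_neg; intro k hk; exact hPB k hk)]
      rw [ereal_sum_real β w hβ (fun i hi => hfin i (hs i hi)),
        ereal_sum_real α w hα hfin]
      congr 1
      calc ∑ i, β i * (w i).toReal = ∑ i, β i * uco α w i :=
            Finset.sum_congr rfl fun i _ => by rw [huco i]
        _ = ∑ i, α i * uco α w i := h
        _ = ∑ i, α i * (w i).toReal :=
            Finset.sum_congr rfl fun i _ => by rw [huco i]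

lemma bridge_le (w : Fin m → EReal) (hw : (∀ i, w i ≠ ⊥) ∨ (∀ i, w i ≠ ⊤))
    (α γ : Fin m → ℝ) (hα : ∀ i, 0 ≤ α i) (hγ : ∀ i, 0 ≤ γ i)
    (hs : ∀ i, γ i ≠ 0 → α i ≠ 0)
    (h : ∑ i, α i * uco α w i ≤ ∑ i, γ i * uco α w i) :
    ∑ i, (α i : EReal) * w i ≤ ∑ i, (γ i : EReal) * w i := by
  classical
  by_cases hPT : ∃ k, α k ≠ 0 ∧ w k = ⊤
  · obtain ⟨k, hk, hwk⟩ := hPT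
    have hnb : ∀ i, w i ≠ ⊥ := by
      rcases hw with h' | h'
      · exact h'
      · exact absurd hwk (h' k)
    have huco : ∀ i, uco α w i = if w i = ⊤ then 1 else 0 := by
      intro i; unfold uco; rw [if_pos ⟨k, hk, hwk⟩]
    have hαpos := uco_top_pos α w hα hk hwk huco
    have hγwit : ∃ i, γ i ≠ 0 ∧ w i = ⊤ := by
      by_contra hcon
      push_neg at hcon
      have hz : ∑ i, γ i * uco α w i = 0 := by
        apply Finset.sum_eq_zero
        intro i _
        by_cases hb : γ i = 0
        · rw [hb, zero_mul]
        · rw [huco i, if_neg (hcon i hb), mul_zero]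
      rw [hz] at h
      linarith
    obtain ⟨i₁, hi₁, hwi₁⟩ := hγwit
    rw [ereal_sum_top_of_wit γ w hγ hnb hi₁ hwi₁]
    exact le_top
  · by_cases hPB : ∃ k, α k ≠ 0 ∧ w k = ⊥
    · obtain ⟨k, hk, hwk⟩ := hPB
      rw [ereal_sum_eq_bot _ _ ⟨k, Finset.mem_univ _, by
          rw [hwk]; exact EReal.coe_mul_bot_of_pos (lt_of_le_of_ne (hα k) (Ne.symm hk))⟩]
      exact bot_le
    · push_neg at hPT hPB
      have hfin : ∀ i, α i ≠ 0 → (w i ≠ ⊥ ∧ w i ≠ ⊤) :=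
        fun i hi => ⟨hPB i hi, hPT i hi⟩
      have huco : ∀ i, uco α w i = (w i).toReal := by
        intro i; unfold uco
        rw [if_neg (by push_neg; intro k hk; exact hPT k hk),
          if_neg (by push_neg; intro k hk; exact hPB k hk)]
      rw [ereal_sum_real γ w hγ (fun i hi => hfin i (hs i hi)),
        ereal_sum_real α w hα hfin]
      rw [EReal.coe_le_coe_iff]
      calc ∑ i, α i * (w i).toReal = ∑ i, α i * uco α w i :=
            Finset.sum_congr rfl fun i _ => by rw [huco i]
        _ ≤ ∑ i, γ i * uco α w i := h
        _ = ∑ i, γ i * (w i).toReal :=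
            Finset.sum_congr rfl fun i _ => by rw [huco i]

end Bridge

theorem stmt6 (d m : ℕ) (hd : 1 ≤ d) (v : Fin m → (Fin d → EReal))
    (hv : ∀ j : Fin d, (∀ i, v i j ≠ ⊥) ∨ (∀ i, v i j ≠ ⊤))
    (α : Fin m → ℝ) (hα : ∀ i, 0 ≤ α i) (hαsum : ∑ i, α i = 1) :
    ∃ β γ : Fin m → ℝ,
      (∀ i, 0 ≤ β i) ∧ (∀ i, 0 ≤ γ i) ∧
      (∑ i, β i = 1) ∧ (∑ i, γ i = 1) ∧
      {i | β i ≠ 0}.ncard ≤ d + 1 ∧ {i | γ i ≠ 0}.ncard ≤ d ∧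
      ∀ j : Fin d,
        (∑ i, (β i : EReal) * v i j) = (∑ i, (α i : EReal) * v i j) ∧
        (∑ i, (α i : EReal) * v i j) ≤ ∑ i, (γ i : EReal) * v i j := by
  classical
  set u : Fin m → Fin d → ℝ := fun i j => uco α (fun k => v k j) i with hu
  obtain ⟨β, hβ0, hβsum, hβsupp, hβcard, hβeq⟩ :=
    cara_eq hd u ({i | α i ≠ 0}.ncard) α le_rfl hα
  obtain ⟨γ, hγ0, hγsum, hγsupp, hγcard, hγge⟩ :=
    cara_ge hd u ({i | α i ≠ 0}.ncard) α le_rfl hα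
  refine ⟨β, γ, hβ0, hγ0, hβsum.trans hαsum, hγsum.trans hαsum, hβcard, hγcard,
    fun j => ⟨?_, ?_⟩⟩
  · exact bridge_eq (fun k => v k j) (hv j) α β hα hβ0 hβsupp (hβeq j)
  · exact bridge_le (fun k => v k j) (hv j) α γ hα hγ0 hγsupp (hγge j)
end

section
/- Let d ≥ 1 be a natural number and D ⊆ (Fin d → ℝ). For every q ∈ convexHull ℝ D there exist a finite set s ⊆ D with at most d elements and a point p ∈ convexHull ℝ s such that q j ≤ p j for every j : Fin d. -/
theorem stmt7 (d : ℕ) (hd : 1 ≤ d) (D : Set (Fin d → ℝ)) (q : Fin d → ℝ)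
    (hq : q ∈ convexHull ℝ D) :
    ∃ s : Finset (Fin d → ℝ), ↑s ⊆ D ∧ s.card ≤ d ∧
      ∃ p ∈ convexHull ℝ (s : Set (Fin d → ℝ)), ∀ j : Fin d, q j ≤ p j := by
  classical
  rw [convexHull_eq_union] at hq
  simp only [Set.mem_iUnion] at hq
  obtain ⟨t, htD, hai, hqt⟩ := hq
  by_cases hcard : t.card ≤ d
  · exact ⟨t, htD, hcard, q, hqt, fun j => le_rfl⟩
  -- card t = d + 1
  have hfr : Module.finrank ℝ (Fin d → ℝ) = d := Module.finrank_fin_fun ℝ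
  have hle : t.card ≤ d + 1 := by
    have h1 := hai.card_le_finrank_succ
    have h2 : Module.finrank ℝ (vectorSpan ℝ (Set.range ((↑) : t → (Fin d → ℝ)))) ≤ d :=
      (Submodule.finrank_le _).trans (le_of_eq hfr)
    rw [Fintype.card_coe] at h1
    omega
  have hcard' : t.card = d + 1 := by omega
  have htot : affineSpan ℝ (Set.range ((↑) : t → (Fin d → ℝ))) = ⊤ := by
    refine hai.affineSpan_eq_top_iff_card_eq_finrank_add_one.2 ?_
    rw [Fintype.card_coe, hfr, hcard']
  set b : AffineBasis t ℝ (Fin d → ℝ) := ⟨((↑) : t → (Fin d → ℝ)), hai, htot⟩ with hb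
  have hrange : Set.range b = (t : Set (Fin d → ℝ)) := Subtype.range_coe
  have hμ : ∀ i, 0 ≤ b.coord i q := by
    have := b.convexHull_eq_nonneg_coord
    rw [hrange] at this
    rw [this] at hqt
    exact hqt
  -- the direction 𝟙
  set o : Fin d → ℝ := fun _ => 1 with ho
  set c : t → ℝ := fun i => (b.coord i).linear o with hc
  have hcoord : ∀ (β : ℝ) (i : t), b.coord i (q + β • o) = b.coord i q + β * c i := by
    intro β i
    have : q + β • o = (β • o) +ᵥ q := by simp [vadd_eq_add, add_comm]
    rw [this, AffineMap.map_vadd, LinearMap.map_smul]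
    simp [hc, vadd_eq_add, add_comm, smul_eq_mul]
  have hsumc : ∑ i, c i = 0 := by
    have h1 : ∑ i, b.coord i (q + (1:ℝ) • o) = 1 := b.sum_coord_apply_eq_one _
    have h2 : ∑ i, b.coord i q = 1 := b.sum_coord_apply_eq_one _
    have h3 : ∑ i, (b.coord i q + 1 * c i) = ∑ i, b.coord i (q + (1:ℝ) • o) :=
      Finset.sum_congr rfl fun i _ => (hcoord 1 i).symm
    rw [h1, Finset.sum_add_distrib, h2] at h3
    simpa using h3
  have hnz : ∃ i, c i ≠ 0 := by
    by_contra h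
    push_neg at h
    have : q + (1:ℝ) • o = q := by
      apply b.ext_elem
      intro i
      rw [hcoord 1 i, h i]
      ring
    have := congrFun this ⟨0, hd⟩
    simp [ho] at this
  have hneg : ∃ j, c j < 0 := by
    by_contra h
    push_neg at h
    obtain ⟨i, hi⟩ := hnz
    have := (Finset.sum_eq_zero_iff_of_nonneg (fun i _ => h i)).1 hsumc i (Finset.mem_univ i)
    exact hi this
  -- choose minimizing j
  obtain ⟨j0, hj0⟩ := hneg
  have hSne : (Finset.univ.filter fun i => c i < 0).Nonempty :=
    ⟨j0, by simp [hj0]⟩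
  obtain ⟨j, hjS, hjmin⟩ := Finset.exists_min_image _ (fun i => b.coord i q / (-c i)) hSne
  have hcj : c j < 0 := (Finset.mem_filter.1 hjS).2
  set β : ℝ := b.coord j q / (-c j) with hβ
  have hβ0 : 0 ≤ β := div_nonneg (hμ j) (by linarith)
  set p : Fin d → ℝ := q + β • o with hp
  have hw : ∀ i, 0 ≤ b.coord i p := by
    intro i
    rw [hp, hcoord β i]
    by_cases hci : c i < 0
    · have hile : β ≤ b.coord i q / (-c i) := hjmin i (by simp [hci])
      have : β * (-c i) ≤ b.coord i q := by
        rw [← le_div_iff₀ (by linarith)] at *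
        exact hile
      nlinarith
    · push_neg at hci
      have : 0 ≤ β * c i := mul_nonneg hβ0 hci
      linarith [hμ i]
  have hwj : b.coord j p = 0 := by
    have hne : c j ≠ 0 := ne_of_lt hcj
    have hne : c j ≠ 0 := ne_of_lt hcj
    rw [hp, hcoord β j, hβ]
    rw [div_mul_eq_mul_div, mul_div_assoc, div_neg, div_self hne]
    ring
  have hwsum : ∑ i, b.coord i p = 1 := b.sum_coord_apply_eq_one _
  -- the facet
  refine ⟨t.erase ↑j, ?_, ?_, p, ?_, ?_⟩
  · exact (Finset.coe_subset.2 (Finset.erase_subset _ _)).trans htD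
  · rw [Finset.card_erase_of_mem j.2, hcard']; omega
  · -- p ∈ convexHull of erase
    have hsum' : ∑ i ∈ Finset.univ.erase j, b.coord i p = 1 := by
      rw [Finset.sum_erase _ (by rw [hwj]), hwsum]
    have hpcm : (Finset.univ.erase j).centerMass (fun i => b.coord i p) (b : t → (Fin d → ℝ)) = p := by
      rw [Finset.centerMass_eq_of_sum_1 _ _ hsum']
      have : ∑ i ∈ Finset.univ.erase j, b.coord i p • (b : t → (Fin d → ℝ)) i
          = ∑ i, b.coord i p • (b : t → (Fin d → ℝ)) i := by
        apply Finset.sum_erase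
        rw [hwj, zero_smul]
      rw [this]
      have := b.affineCombination_coord_eq_self p
      rwa [Finset.univ.affineCombination_eq_linear_combination _ _ hwsum] at this
    rw [← hpcm]
    apply Finset.centerMass_mem_convexHull
    · intro i _; exact hw i
    · rw [hsum']; norm_num
    · intro i hi
      simp only [Finset.mem_erase, Finset.mem_univ, and_true] at hi
      have : ((b : t → (Fin d → ℝ)) i : Fin d → ℝ) = (i : Fin d → ℝ) := rfl
      rw [this]
      simp only [Finset.coe_erase, Set.mem_diff, Set.mem_singleton_iff]
      exact ⟨i.2, fun h => hi (Subtype.ext h)⟩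
  · intro k
    rw [hp]
    simp only [Pi.add_apply, Pi.smul_apply, smul_eq_mul, ho]
    nlinarith
end

section
/- Let (Ω, 𝒜) be a measurable space and X : Ω → ℝ a measurable function. Suppose that for every probability measure μ on Ω, one has ∫⁻ ω, ENNReal.ofReal (X ω) ∂μ < ∞ or ∫⁻ ω, ENNReal.ofReal (−X ω) ∂μ < ∞. Then X is bounded above (there exists C with X ω ≤ C for all ω) or X is bounded below (there exists C with C ≤ X ω for all ω). -/
/-!
If `X` is unbounded above, pick points `xₙ` with `X xₙ > 2ⁿ⁺¹`; the probability measure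
`∑ 2⁻ⁿ⁻¹ δ_{xₙ}` gives `X⁺` infinite integral. Doing the same for `-X` and averaging the two
measures yields a single probability measure under which both `X⁺` and `X⁻` have infinite
integral.
-/

open MeasureTheory ENNReal

lemma ENNReal.tsum_inv_two_pow_succ : ∑' n : ℕ, (2⁻¹ : ℝ≥0∞) ^ (n + 1) = 1 := by
  rw [ENNReal.tsum_geometric_add_one, one_sub_inv_two, ENNReal.mul_inv_cancel] <;> norm_num

namespace MeasureTheory

variable {Ω : Type*} [MeasurableSpace Ω]

noncomputable def geometricDiracs (x : ℕ → Ω) : Measure Ω :=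
  Measure.sum fun n => (2⁻¹ : ℝ≥0∞) ^ (n + 1) • Measure.dirac (x n)

instance isProbabilityMeasure_geometricDiracs (x : ℕ → Ω) :
    IsProbabilityMeasure (geometricDiracs x) :=
  ⟨by simpa [geometricDiracs, Measure.sum_apply _ MeasurableSet.univ] using tsum_inv_two_pow_succ⟩

lemma lintegral_geometricDiracs (x : ℕ → Ω) {f : Ω → ℝ≥0∞} (hf : Measurable f) :
    ∫⁻ ω, f ω ∂geometricDiracs x = ∑' n, (2⁻¹ : ℝ≥0∞) ^ (n + 1) * f (x n) := by
  simp only [geometricDiracs, lintegral_sum_measure, lintegral_smul_measure,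
    lintegral_dirac' _ hf, smul_eq_mul]

lemma exists_isProbabilityMeasure_lintegral_ofReal_eq_top {f : Ω → ℝ} (hf : Measurable f)
    (hunb : ∀ C : ℝ, ∃ ω, C < f ω) :
    ∃ μ : Measure Ω, IsProbabilityMeasure μ ∧ ∫⁻ ω, ENNReal.ofReal (f ω) ∂μ = ⊤ := by
  choose x hx using fun n : ℕ => hunb (2 ^ (n + 1))
  refine ⟨geometricDiracs x, inferInstance, ?_⟩
  rw [lintegral_geometricDiracs x hf.ennreal_ofReal]
  refine eq_top_mono (ENNReal.tsum_le_tsum fun n => ?_)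
    (ENNReal.tsum_const_eq_top_of_ne_zero (α := ℕ) one_ne_zero)
  calc (1 : ℝ≥0∞) = 2⁻¹ ^ (n + 1) * 2 ^ (n + 1) := by
        rw [← mul_pow, ENNReal.inv_mul_cancel two_ne_zero ofNat_ne_top, one_pow]
    _ ≤ 2⁻¹ ^ (n + 1) * ENNReal.ofReal (f (x n)) := by
        gcongr
        simpa [ENNReal.ofReal_pow] using ENNReal.ofReal_le_ofReal (hx n).le

instance isProbabilityMeasure_inv_two_smul_add (μ ν : Measure Ω) [IsProbabilityMeasure μ]
    [IsProbabilityMeasure ν] : IsProbabilityMeasure ((2⁻¹ : ℝ≥0∞) • (μ + ν)) :=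
  ⟨by simp [← two_mul, ENNReal.mul_inv_cancel]⟩

end MeasureTheory

theorem stmt11 {Ω : Type*} [MeasurableSpace Ω] (X : Ω → ℝ) (hX : Measurable X)
    (h : ∀ μ : Measure Ω, IsProbabilityMeasure μ →
      (∫⁻ ω, ENNReal.ofReal (X ω) ∂μ < ⊤ ∨ ∫⁻ ω, ENNReal.ofReal (-X ω) ∂μ < ⊤)) :
    (∃ C : ℝ, ∀ ω, X ω ≤ C) ∨ (∃ C : ℝ, ∀ ω, C ≤ X ω) := by
  by_contra! hunb
  obtain ⟨μ, _, hμ⟩ := exists_isProbabilityMeasure_lintegral_ofReal_eq_top hX hunb.1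
  obtain ⟨ν, _, hν⟩ := exists_isProbabilityMeasure_lintegral_ofReal_eq_top
    (f := fun ω => -X ω) hX.neg fun C => (hunb.2 (-C)).imp fun _ => lt_neg_of_lt_neg
  simpa [lintegral_smul_measure, lintegral_add_measure, hμ, hν] using
    h ((2⁻¹ : ℝ≥0∞) • (μ + ν)) inferInstance
end

section
/- Let d be a natural number and D ⊆ (Fin d → EReal) a compact set, where EReal carries its order topology and Fin d → EReal the product topology. Then the downward closure { x : Fin d → EReal | ∃ y ∈ D, x ≤ y } is compact, and the set { x : Fin d → ℝ | ∃ y ∈ D, ∀ j, (x j : EReal) ≤ y j } is a closed subset of Fin d → ℝ. -/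
theorem stmt14 (d : ℕ) (D : Set (Fin d → EReal)) (hD : IsCompact D) :
    IsCompact {x : Fin d → EReal | ∃ y ∈ D, x ≤ y} ∧
      IsClosed {x : Fin d → ℝ | ∃ y ∈ D, ∀ j : Fin d, (x j : EReal) ≤ y j} := by
  have hcont : Continuous (fun x : Fin d → ℝ => fun j => (x j : EReal)) :=
    continuous_pi fun j => continuous_coe_real_ereal.comp (continuous_apply j)
  have hK : IsCompact {x : Fin d → EReal | ∃ y ∈ D, x ≤ y} := by
    have h1 : IsCompact ((Set.univ : Set (Fin d → EReal)) ×ˢ D) :=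
      isCompact_univ.prod hD
    have h2 : IsClosed {p : (Fin d → EReal) × (Fin d → EReal) | p.1 ≤ p.2} :=
      isClosed_le continuous_fst continuous_snd
    have h3 : IsCompact (((Set.univ : Set (Fin d → EReal)) ×ˢ D) ∩ {p | p.1 ≤ p.2}) :=
      h1.inter_right h2
    have h4 := h3.image continuous_fst
    convert h4 using 1
    ext x
    simp only [Set.mem_image, Set.mem_inter_iff, Set.mem_prod, Set.mem_univ, true_and,
      Set.mem_setOf_eq]
    constructor
    · rintro ⟨y, hy, hxy⟩; exact ⟨(x, y), ⟨hy, hxy⟩, rfl⟩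
    · rintro ⟨⟨a, b⟩, ⟨hb, hab⟩, rfl⟩; exact ⟨b, hb, hab⟩
  refine ⟨hK, ?_⟩
  have hcl : IsClosed {x : Fin d → EReal | ∃ y ∈ D, x ≤ y} := hK.isClosed
  exact hcl.preimage hcont
end

section
/- Let S be a type endowed with the discrete topology, W ∈ ℝ and λ* ∈ [0,1). Let w : List S → ℝ satisfy |w l| ≤ W for every list l, and let lam : List S → ℝ satisfy 0 ≤ lam l ≤ λ* for every list l. For π : ℕ → S and r ∈ ℕ, write pref π r for the list [π 0, π 1, …, π (r−1)] of the first r values of π. Define F : (ℕ → S) → ℝ by F π = ∑'_{r ∈ ℕ} (∏_{ℓ ∈ Finset.range r} lam (pref π (ℓ+1))) * w (pref π (r+1)). Then for every π the family r ↦ (∏_{ℓ ∈ Finset.range r} lam (pref π (ℓ+1))) * w (pref π (r+1)) is summable, and F is continuous with respect to the product topology on ℕ → S. -/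
/-!
Every term of the series is bounded by `W * lamStar ^ r`, a summable geometric majorant
independent of the play, and the `r`-th term depends only on the first `r + 1` letters of the
play, hence is continuous for the product of discrete topologies. Weierstrass' M-test then gives
summability and continuity of the sum.
-/

open Finset

section DiscountedSum

variable {S : Type*}

theorem List.take_ofFn_apply (π : ℕ → S) {m n : ℕ} (h : m ≤ n) :
    (List.ofFn fun i : Fin n => π i).take m = List.ofFn fun i : Fin m => π i :=
  (Fin.ofFn_take_eq_take_ofFn h _).symm

theorem continuous_comp_ofFn_apply [TopologicalSpace S] [DiscreteTopology S]
    {X : Type*} [TopologicalSpace X] (g : List S → X) (n : ℕ) :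
    Continuous fun π : ℕ → S => g (List.ofFn fun i : Fin n => π i) :=
  (continuous_of_discreteTopology (f := fun v : Fin n → S => g (List.ofFn v))).comp
    (continuous_pi fun i => continuous_apply (i : ℕ))

def discountedTerm (lam w : List S → ℝ) (π : ℕ → S) (r : ℕ) : ℝ :=
  (∏ ℓ ∈ range r, lam (List.ofFn fun i : Fin (ℓ + 1) => π i)) *
    w (List.ofFn fun i : Fin (r + 1) => π i)

variable {lam w : List S → ℝ}

theorem abs_discountedTerm_le {W lamStar : ℝ} (hw : ∀ l, |w l| ≤ W)
    (hlam : ∀ l, 0 ≤ lam l ∧ lam l ≤ lamStar) (π : ℕ → S) (r : ℕ) :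
    |discountedTerm lam w π r| ≤ W * lamStar ^ r := by
  have hprod_nonneg : 0 ≤ ∏ ℓ ∈ range r, lam (List.ofFn fun i : Fin (ℓ + 1) => π i) :=
    prod_nonneg fun _ _ => (hlam _).1
  have hprod_le : ∏ ℓ ∈ range r, lam (List.ofFn fun i : Fin (ℓ + 1) => π i) ≤ lamStar ^ r :=
    (prod_le_prod (fun _ _ => (hlam _).1) fun _ _ => (hlam _).2).trans_eq (by simp)
  rw [discountedTerm, abs_mul, abs_of_nonneg hprod_nonneg, mul_comm W]
  exact mul_le_mul hprod_le (hw _) (abs_nonneg _) (hprod_nonneg.trans hprod_le)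

theorem continuous_discountedTerm [TopologicalSpace S] [DiscreteTopology S] (r : ℕ) :
    Continuous fun π : ℕ → S => discountedTerm lam w π r := by
  have hprefix : ∀ π : ℕ → S, discountedTerm lam w π r =
      (∏ ℓ ∈ range r, lam ((List.ofFn fun i : Fin (r + 1) => π i).take (ℓ + 1))) *
        w (List.ofFn fun i : Fin (r + 1) => π i) := fun π => by
    refine congrArg (· * _) (prod_congr rfl fun ℓ hℓ => ?_)
    rw [List.take_ofFn_apply π (by simp at hℓ; omega)]
  simp only [hprefix]
  exact continuous_comp_ofFn_apply (fun l => (∏ ℓ ∈ range r, lam (l.take (ℓ + 1))) * w l) _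

end DiscountedSum

theorem stmt17 (S : Type*) [TopologicalSpace S] [DiscreteTopology S]
    (W lamStar : ℝ) (hlamStar0 : 0 ≤ lamStar) (hlamStar1 : lamStar < 1)
    (w : List S → ℝ) (hw : ∀ l, |w l| ≤ W)
    (lam : List S → ℝ) (hlam : ∀ l, 0 ≤ lam l ∧ lam l ≤ lamStar) :
    (∀ π : ℕ → S, Summable (fun r : ℕ =>
      (∏ ℓ ∈ Finset.range r, lam (List.ofFn (fun i : Fin (ℓ + 1) => π i))) *
        w (List.ofFn (fun i : Fin (r + 1) => π i)))) ∧
    Continuous (fun π : ℕ → S => ∑' r : ℕ,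
      (∏ ℓ ∈ Finset.range r, lam (List.ofFn (fun i : Fin (ℓ + 1) => π i))) *
        w (List.ofFn (fun i : Fin (r + 1) => π i))) := by
  have hbound := abs_discountedTerm_le hw hlam
  have hgeom : Summable fun r : ℕ => W * lamStar ^ r :=
    (summable_geometric_of_lt_one hlamStar0 hlamStar1).mul_left W
  exact ⟨fun π => hgeom.of_norm_bounded (hbound π),
    continuous_tsum (f := fun r π => discountedTerm lam w π r) continuous_discountedTerm hgeom
      fun r π => hbound π r⟩
end

section
/- Let S be a type endowed with the discrete topology, T ⊆ S a set, η > 0, and w : S → ℝ with η ≤ w s for every s ∈ S. Define F : (ℕ → S) → EReal by: if there exists r with π r ∈ T, then F π = ((∑ ℓ ∈ Finset.range r₀, w (π ℓ) : ℝ) : EReal) where r₀ is the least r with π r ∈ T; otherwise F π = ⊤. Then F is continuous, where ℕ → S carries the product topology and EReal its order topology. -/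
open Classical in
theorem stmt18 (S : Type*) [TopologicalSpace S] [DiscreteTopology S]
    (T : Set S) (η : ℝ) (hη : 0 < η) (w : S → ℝ) (hw : ∀ s, η ≤ w s) :
    Continuous (fun π : ℕ → S =>
      if h : ∃ r, π r ∈ T then
        ((∑ ℓ ∈ Finset.range (Nat.find h), w (π ℓ) : ℝ) : EReal)
      else (⊤ : EReal)) := by
  set F : (ℕ → S) → EReal := fun π =>
      if h : ∃ r, π r ∈ T then
        ((∑ ℓ ∈ Finset.range (Nat.find h), w (π ℓ) : ℝ) : EReal)
      else (⊤ : EReal) with hF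
  rw [continuous_iff_continuousAt]
  intro π
  -- cylinder neighborhoods
  have cyl : ∀ n : ℕ, ∀ᶠ π' in nhds π, ∀ i < n, π' i = π i := by
    intro n
    have hopen : IsOpen {π' : ℕ → S | ∀ i < n, π' i = π i} := by
      have : {π' : ℕ → S | ∀ i < n, π' i = π i}
          = ⋂ i ∈ Finset.range n, (fun π' : ℕ → S => π' i) ⁻¹' {π i} := by
        ext π'; simp [Set.mem_iInter]
      rw [this]
      exact isOpen_biInter_finset fun i _ =>
        (continuous_apply i).isOpen_preimage _ (isOpen_discrete _)
    exact hopen.mem_nhds (by intro i _; rfl)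
  by_cases h : ∃ r, π r ∈ T
  · -- locally constant
    have key : ∀ᶠ π' in nhds π, F π' = F π := by
      filter_upwards [cyl (Nat.find h + 1)] with π' hπ'
      have h' : ∃ r, π' r ∈ T := ⟨Nat.find h, by
        rw [hπ' (Nat.find h) (Nat.lt_succ_self _)]; exact Nat.find_spec h⟩
      have hfind : Nat.find h' = Nat.find h := by
        apply le_antisymm
        · exact Nat.find_le (by
            rw [hπ' (Nat.find h) (Nat.lt_succ_self _)]; exact Nat.find_spec h)
        · by_contra hc
          push_neg at hc
          have := Nat.find_spec h'
          rw [hπ' (Nat.find h') (lt_trans hc (Nat.lt_succ_self _))] at this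
          exact Nat.find_min h hc this
      simp only [hF, dif_pos h, dif_pos h', hfind]
      congr 1
      exact_mod_cast Finset.sum_congr rfl fun ℓ hℓ => by
        rw [hπ' ℓ (lt_trans (Finset.mem_range.mp hℓ) (Nat.lt_succ_self _))]
    exact ContinuousAt.congr continuousAt_const (Filter.EventuallyEq.symm key)
  · have hFπ : F π = ⊤ := by simp [hF, dif_neg h]
    rw [ContinuousAt, hFπ, EReal.tendsto_nhds_top_iff_real]
    intro x
    obtain ⟨n, hn⟩ := exists_nat_gt (x / η)
    have hx : x < n * η := (div_lt_iff₀ hη).mp hn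
    filter_upwards [cyl n] with π' hπ'
    by_cases h' : ∃ r, π' r ∈ T
    · have hge : n ≤ Nat.find h' := by
        by_contra hc
        push_neg at hc
        have := Nat.find_spec h'
        rw [hπ' _ hc] at this
        exact h ⟨_, this⟩
      have hsum : (n : ℝ) * η ≤ ∑ ℓ ∈ Finset.range (Nat.find h'), w (π' ℓ) := by
        calc (n : ℝ) * η ≤ (Nat.find h' : ℝ) * η := by
              apply mul_le_mul_of_nonneg_right _ hη.le
              exact_mod_cast hge
          _ = ∑ _ℓ ∈ Finset.range (Nat.find h'), η := by
              simp [mul_comm]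
          _ ≤ _ := Finset.sum_le_sum fun ℓ _ => hw _
      simp only [hF, dif_pos h']
      exact_mod_cast lt_of_lt_of_le hx hsum
    · simp [hF, dif_neg h', EReal.coe_lt_top]
end

section
/- Let S be a finite type endowed with the discrete topology, R : S → S → Prop a relation, and P = { π : ℕ → S | ∀ n, R (π n) (π (n+1)) } ⊆ ℕ → S with the product topology. Let f : (ℕ → S) → EReal be continuous on P and prefix-independent on P, i.e. f (fun n => π (n+1)) = f π for every π ∈ P. Let π, π' ∈ P, and suppose there exist s ∈ S occurring infinitely often in π' (for every m there is n ≥ m with π' n = s), and r, k ∈ ℕ and u : ℕ → S with u 0 = s, u k = π r, and R (u i) (u (i+1)) for every i < k. Then f π' = f π. -/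
theorem stmt19 (S : Type*) [Fintype S] [TopologicalSpace S] [DiscreteTopology S]
    (R : S → S → Prop) (P : Set (ℕ → S))
    (hP : P = {π : ℕ → S | ∀ n, R (π n) (π (n + 1))})
    (f : (ℕ → S) → EReal) (hf : ContinuousOn f P)
    (hpi : ∀ π ∈ P, f (fun n => π (n + 1)) = f π)
    (π π' : ℕ → S) (hπ : π ∈ P) (hπ' : π' ∈ P)
    (s : S) (hs : ∀ m : ℕ, ∃ n ≥ m, π' n = s)
    (r k : ℕ) (u : ℕ → S) (hu0 : u 0 = s) (huk : u k = π r)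
    (hu : ∀ i < k, R (u i) (u (i + 1))) :
    f π' = f π := by
  -- iterated prefix-independence
  have key : ∀ (j : ℕ) (τ : ℕ → S), τ ∈ P →
      (fun n => τ (n + j)) ∈ P ∧ f (fun n => τ (n + j)) = f τ := by
    intro j
    induction j with
    | zero =>
      intro τ hτ
      have he : (fun n => τ (n + 0)) = τ := by funext n; rfl
      rw [he]; exact ⟨hτ, rfl⟩
    | succ j ih =>
      intro τ hτ
      have hτ' : (fun n => τ (n + 1)) ∈ P := by
        rw [hP] at hτ ⊢
        intro n; exact hτ (n + 1)
      obtain ⟨h1, h2⟩ := ih _ hτ'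
      have he : (fun n => τ (n + (j + 1))) = (fun n => (fun m => τ (m + 1)) (n + j)) := by
        funext n; congr 1

      constructor
      · rw [he]; exact h1
      · rw [he, h2, hpi τ hτ]
  -- choose occurrences of s
  choose g hg hg' using hs
  -- glued plays
  set σ : ℕ → ℕ → S := fun m i =>
    if i ≤ g m then π' i else if i ≤ g m + k then u (i - g m) else π (i - g m - k + r) with hσ
  have hσev : ∀ m i, σ m i =
      if i ≤ g m then π' i else if i ≤ g m + k then u (i - g m) else π (i - g m - k + r) :=
    fun m i => rfl
  have hπR : ∀ n, R (π n) (π (n + 1)) := by rw [hP] at hπ; exact hπ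
  have hπ'R : ∀ n, R (π' n) (π' (n + 1)) := by rw [hP] at hπ'; exact hπ'
  have hσmem : ∀ m, σ m ∈ P := by
    intro m
    rw [hP]
    intro i
    rcases lt_trichotomy i (g m) with hi | hi | hi
    · have e1 : σ m i = π' i := by rw [hσev, if_pos hi.le]
      have e2 : σ m (i + 1) = π' (i + 1) := by rw [hσev, if_pos (by omega)]
      rw [e1, e2]; exact hπ'R i
    · -- i = g m
      subst hi
      rcases Nat.eq_zero_or_pos k with hk | hk
      · subst hk
        have e1 : σ m (g m) = π r := by
          rw [hσev, if_pos le_rfl, hg' m, ← hu0, huk]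
        have e2 : σ m (g m + 1) = π (r + 1) := by
          rw [hσev, if_neg (by omega), if_neg (by omega)]
          congr 1; omega
        rw [e1, e2]; exact hπR r
      · have e1 : σ m (g m) = u 0 := by rw [hσev, if_pos le_rfl, hg' m, hu0]
        have e2 : σ m (g m + 1) = u 1 := by
          rw [hσev, if_neg (by omega), if_pos (by omega)]
          congr 1; omega
        rw [e1, e2]; exact hu 0 hk
    · -- i > g m
      rcases lt_trichotomy i (g m + k) with hik | hik | hik
      · have e1 : σ m i = u (i - g m) := by
          rw [hσev, if_neg (by omega), if_pos (by omega)]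
        have e2 : σ m (i + 1) = u (i - g m + 1) := by
          rw [hσev, if_neg (by omega), if_pos (by omega)]
          congr 1; omega
        rw [e1, e2]; exact hu _ (by omega)
      · have e1 : σ m i = π r := by
          rw [hσev, if_neg (by omega), if_pos (by omega)]
          rw [show i - g m = k by omega, huk]
        have e2 : σ m (i + 1) = π (r + 1) := by
          rw [hσev, if_neg (by omega), if_neg (by omega)]
          congr 1; omega
        rw [e1, e2]; exact hπR r
      · have e1 : σ m i = π (i - g m - k + r) := by
          rw [hσev, if_neg (by omega), if_neg (by omega)]
        have e2 : σ m (i + 1) = π (i - g m - k + r + 1) := by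
          rw [hσev, if_neg (by omega), if_neg (by omega)]
          congr 1; omega
        rw [e1, e2]; exact hπR _
  -- each glued play has value f π
  have hval : ∀ m, f (σ m) = f π := by
    intro m
    have htail : (fun n => σ m (n + (g m + k))) = fun n => π (n + r) := by
      funext n
      rcases Nat.eq_zero_or_pos n with hn | hn
      · subst hn
        rcases Nat.eq_zero_or_pos k with hk | hk
        · subst hk
          rw [hσev, if_pos (by omega)]
          rw [show (0 : ℕ) + (g m + 0) = g m by omega, hg' m, ← hu0, huk]
          congr 1; omega
        · rw [hσev, if_neg (by omega), if_pos (by omega)]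
          rw [show 0 + (g m + k) - g m = k by omega, huk]
          congr 1; omega
      · rw [hσev, if_neg (by omega), if_neg (by omega)]
        congr 1; omega
    have h1 := (key (g m + k) (σ m) (hσmem m)).2
    rw [htail] at h1
    rw [← h1]
    exact (key r π hπ).2
  -- σ m → π' in the product topology
  have htend : Filter.Tendsto σ Filter.atTop (nhds π') := by
    rw [tendsto_pi_nhds]
    intro i
    apply Filter.Tendsto.congr' (f₁ := fun _ => π' i)
    · filter_upwards [Filter.eventually_ge_atTop i] with m hm
      have hle : i ≤ g m := le_trans hm (hg m)
      rw [hσev, if_pos hle]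
    · exact tendsto_const_nhds
  have htend' : Filter.Tendsto σ Filter.atTop (nhdsWithin π' P) :=
    tendsto_nhdsWithin_of_tendsto_nhds_of_eventually_within _ htend
      (Filter.Eventually.of_forall hσmem)
  have h2 : Filter.Tendsto (fun m => f (σ m)) Filter.atTop (nhds (f π')) :=
    (hf π' hπ').tendsto.comp htend'
  have h3 : Filter.Tendsto (fun m => f (σ m)) Filter.atTop (nhds (f π)) := by
    simp_rw [hval]; exact tendsto_const_nhds
  exact tendsto_nhds_unique h2 h3
end
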